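/- arXiv:2405.04473 — 3 statements merged into one kernel-verified Lean document; each statement's English description precedes it below -/
import Mathlib

section
/- Let d ≥ 1, λ₀ ∈ (0,1], δ := λ₀/200, λ₁ ∈ [λ₀/2, 0.9λ₀], and β ∈ [1/2, 1]. There exists a constant C, depending only on d and λ₀, such that for any t ∈ [0,∞) and any k ∈ ℤ^d \ {0}: Σ_{l ∈ ℤ^d \ {0}} ∫_0^t ( |t−s| |k|^{1−β} ⟨t⟩^{6d} ) / ( |l|^{1−β} ⟨s⟩^{6d} ) · ( A(t,k,tk) / A(s,k,tk) ) · exp(−δ(s^{1/3} + |l|^{1/3})) ds ≤ C. -/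
noncomputable section

/-- Japanese bracket `⟨r⟩ = (1+r²)^(1/2)`. -/
def jap (r : ℝ) : ℝ := Real.sqrt (1 + r ^ 2)

/-- The weight exponent `λ(t,r)`. -/
def lamW (lam1 δ t r : ℝ) : ℝ :=
  lam1 * jap r ^ ((1:ℝ)/3) + δ * (1 + t) ^ (-δ) * jap r ^ ((1:ℝ)/3)
    + δ * (1 + t * jap r ^ (-(2:ℝ)/3)) ^ (-δ) * jap r ^ ((1:ℝ)/3)

/-- The weight exponent `λ♯(t,r)`. -/
def lamSharpW (lam1 δ t r : ℝ) : ℝ :=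
  lam1 * jap r ^ ((1:ℝ)/3) - δ * (1 + t) ^ (-δ) * jap r ^ ((1:ℝ)/3)
    - δ * (1 + t * jap r ^ (-(2:ℝ)/3)) ^ (-δ) * jap r ^ ((1:ℝ)/3)

/-- `⟨k,ξ⟩ = (1+|k|²+|ξ|²)^(1/2)`. -/
def brk2 {d : ℕ} (k ξ : EuclideanSpace ℝ (Fin d)) : ℝ := Real.sqrt (1 + ‖k‖ ^ 2 + ‖ξ‖ ^ 2)

/-- `|(k,ξ)|`, the Euclidean norm of `(k,ξ) ∈ ℝ^{2d}`. -/
def nrm2 {d : ℕ} (k ξ : EuclideanSpace ℝ (Fin d)) : ℝ := Real.sqrt (‖k‖ ^ 2 + ‖ξ‖ ^ 2)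

/-- The weight `A(t,k,ξ) = exp(λ(t,|(k,ξ)|))`. -/
def Aw {d : ℕ} (lam1 δ t : ℝ) (k ξ : EuclideanSpace ℝ (Fin d)) : ℝ :=
  Real.exp (lamW lam1 δ t (nrm2 k ξ))

/-- The weight `A♯(t,k,ξ) = exp(λ♯(t,|(k,ξ)|))`. -/
def AwSharp {d : ℕ} (lam1 δ t : ℝ) (k ξ : EuclideanSpace ℝ (Fin d)) : ℝ :=
  Real.exp (lamSharpW lam1 δ t (nrm2 k ξ))

/-- The lattice vector `k ∈ ℤ^d` viewed as a point of `ℝ^d`. -/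
def latc {d : ℕ} (k : Fin d → ℤ) : EuclideanSpace ℝ (Fin d) :=
  (WithLp.equiv 2 (Fin d → ℝ)).symm fun i => (k i : ℝ)

open Real Nat MeasureTheory

namespace Stmt9Aux

lemma pow_le_fact_mul_exp (n : ℕ) {x : ℝ} (hx : 0 ≤ x) : x ^ n ≤ (n ! : ℝ) * Real.exp x := by
  have h := Real.sum_le_exp_of_nonneg hx (n+1)
  have h1 : x ^ n / (n ! : ℝ) ≤ ∑ i ∈ Finset.range (n+1), x ^ i / i ! :=
    Finset.single_le_sum (f := fun i => x ^ i / (i ! : ℝ))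
      (fun i _ => by positivity) (Finset.self_mem_range_succ n)
  have hn : (0:ℝ) < (n ! : ℝ) := by positivity
  have := h1.trans h
  rw [div_le_iff₀ hn] at this
  linarith [this]

lemma pow_mul_exp_neg_le (n : ℕ) {c x : ℝ} (hc : 0 < c) (hx : 0 ≤ x) :
    x ^ n * Real.exp (-(c*x)) ≤ (n ! : ℝ) / c ^ n := by
  have h := pow_le_fact_mul_exp n (x := c*x) (by positivity)
  rw [mul_pow] at h
  have hcn : (0:ℝ) < c ^ n := by positivity
  have hexp : (0:ℝ) < Real.exp (-(c*x)) := Real.exp_pos _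
  have h3 : Real.exp (c*x) * Real.exp (-(c*x)) = 1 := by rw [← Real.exp_add]; simp
  rw [le_div_iff₀ hcn, ← sub_nonneg]
  have expand : (n ! : ℝ) - x ^ n * Real.exp (-(c*x)) * c ^ n
      = ((n ! : ℝ) * Real.exp (c*x) - c ^ n * x ^ n) * Real.exp (-(c*x))
        + (n ! : ℝ) * (1 - Real.exp (c*x) * Real.exp (-(c*x))) := by ring
  rw [expand, h3]
  have : (0:ℝ) ≤ ((n ! : ℝ) * Real.exp (c*x) - c ^ n * x ^ n) * Real.exp (-(c*x)) :=
    mul_nonneg (by linarith) hexp.le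
  simp [this]

lemma lin_mul_exp_neg {x : ℝ} (hx : 0 ≤ x) : x * Real.exp (-x) ≤ Real.exp (-(x/2)) := by
  have h : x ≤ Real.exp (x/2) := by
    have h3 := Real.sum_le_exp_of_nonneg (by linarith : (0:ℝ) ≤ x/2) 3
    have hexp : 1 + x/2 + (x/2)^2/2 ≤ Real.exp (x/2) := by
      have : ∑ i ∈ Finset.range 3, (x/2) ^ i / i ! = 1 + x/2 + (x/2)^2/2 := by
        simp [Finset.sum_range_succ, Nat.factorial]
      linarith [this ▸ h3]
    nlinarith
  have h2 : Real.exp (-x) = Real.exp (-(x/2)) * Real.exp (-(x/2)) := by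
    rw [← Real.exp_add]; ring_nf
  calc x * Real.exp (-x) = x * Real.exp (-(x/2)) * Real.exp (-(x/2)) := by rw [h2]; ring
    _ ≤ Real.exp (x/2) * Real.exp (-(x/2)) * Real.exp (-(x/2)) := by
        have := Real.exp_pos (-(x/2))
        nlinarith
    _ = Real.exp (-(x/2)) := by rw [← Real.exp_add]; simp

lemma one_add_pow_mul_exp_neg (n : ℕ) {c y : ℝ} (hc : 0 < c) (hy : 0 ≤ y) :
    (1+y)^n * Real.exp (-(c*y)) ≤ 2^n * (1 + (n ! : ℝ)/c^n) := by
  have h1 : (1+y)^n ≤ 2^n * (1 + y^n) := by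
    rcases le_total y 1 with hy1 | hy1
    · have : (1+y)^n ≤ 2^n := pow_le_pow_left₀ (by linarith) (by linarith) n
      have hyn : 0 ≤ y^n := by positivity
      nlinarith [pow_nonneg (by norm_num : (0:ℝ) ≤ 2) n]
    · have : (1+y)^n ≤ (2*y)^n := pow_le_pow_left₀ (by linarith) (by linarith) n
      rw [mul_pow] at this
      have hyn : 0 ≤ y^n := by positivity
      nlinarith [pow_nonneg (by norm_num : (0:ℝ) ≤ 2) n]
  calc (1+y)^n * Real.exp (-(c*y)) ≤ (2^n * (1 + y^n)) * Real.exp (-(c*y)) :=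
        mul_le_mul_of_nonneg_right h1 (Real.exp_pos _).le
    _ = 2^n * (Real.exp (-(c*y)) + y^n * Real.exp (-(c*y))) := by ring
    _ ≤ 2^n * (1 + (n ! : ℝ)/c^n) := by
        apply mul_le_mul_of_nonneg_left ?_ (by positivity)
        have e1 : Real.exp (-(c*y)) ≤ 1 := Real.exp_le_one_iff.mpr (by nlinarith)
        exact add_le_add e1 (pow_mul_exp_neg_le n hc hy)

lemma jap_pos (r : ℝ) : 0 < jap r := Real.sqrt_pos.mpr (by positivity)

lemma one_le_jap (r : ℝ) : 1 ≤ jap r := by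
  rw [show (1:ℝ) = Real.sqrt 1 by simp]
  exact Real.sqrt_le_sqrt (by nlinarith [sq_nonneg r])

lemma self_le_jap {r : ℝ} (hr : 0 ≤ r) : r ≤ jap r := by
  have : r = Real.sqrt (r ^ 2) := by rw [Real.sqrt_sq hr]
  rw [this]; exact Real.sqrt_le_sqrt (by nlinarith [Real.sq_sqrt (by positivity : (0:ℝ) ≤ r^2)])

lemma jap_le_one_add {t : ℝ} (ht : 0 ≤ t) : jap t ≤ 1 + t := by
  rw [jap, show (1:ℝ) + t = Real.sqrt ((1+t)^2) from (Real.sqrt_sq (by linarith)).symm]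
  exact Real.sqrt_le_sqrt (by nlinarith)

lemma jap_sq (t : ℝ) : jap t ^ 2 = 1 + t ^ 2 := Real.sq_sqrt (by positivity)

lemma key_decay {δ s t : ℝ} (hδ : 0 < δ) (hs : 0 ≤ s) (hst : s ≤ t) :
    δ * (t - s) * (1+t) ^ (-(1+δ)) ≤ (1+s) ^ (-δ) - (1+t) ^ (-δ) := by
  set u : ℝ := 1 + s with hu
  set v : ℝ := 1 + t with hv
  have hu0 : (0:ℝ) < u := by simp [hu]; linarith
  have hv0 : (0:ℝ) < v := by simp [hv]; linarith
  have huv : u ≤ v := by simp [hu, hv]; linarith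
  have hlog : 1 - u / v ≤ Real.log (v / u) := by
    have h1 : Real.log (u / v) ≤ u / v - 1 := Real.log_le_sub_one_of_pos (by positivity)
    have h2 : Real.log (u / v) = - Real.log (v / u) := by
      rw [Real.log_div hu0.ne' hv0.ne', Real.log_div hv0.ne' hu0.ne']; ring
    linarith [h2 ▸ h1]
  have hpow : 1 + δ * Real.log (v / u) ≤ (v / u) ^ δ := by
    rw [Real.rpow_def_of_pos (by positivity)]
    calc 1 + δ * Real.log (v/u) = Real.log (v/u) * δ + 1 := by ring
      _ ≤ Real.exp (Real.log (v/u) * δ) := Real.add_one_le_exp _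
  have hsplit : u ^ (-δ) = (v/u) ^ δ * v ^ (-δ) := by
    rw [Real.div_rpow hv0.le hu0.le, Real.rpow_neg hu0.le, Real.rpow_neg hv0.le]
    field_simp
  have hvd : (0:ℝ) < v ^ (-δ) := Real.rpow_pos_of_pos hv0 _
  have step : v ^ (-δ) * (δ * ((v - u)/v)) ≤ u ^ (-δ) - v ^ (-δ) := by
    rw [hsplit]
    have h3 : δ * ((v-u)/v) ≤ δ * Real.log (v/u) := by
      apply mul_le_mul_of_nonneg_left ?_ hδ.le
      have : (v - u)/v = 1 - u/v := by field_simp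
      linarith [this ▸ hlog]
    nlinarith [hpow, hvd]
  have hvsplit : v ^ (-(1+δ)) = v ^ (-δ) * v⁻¹ := by
    rw [show -(1+δ) = -δ + (-1) by ring, Real.rpow_add hv0, Real.rpow_neg_one]
  calc δ * (t - s) * v ^ (-(1+δ)) = v ^ (-δ) * (δ * ((v - u)/v)) := by
        rw [hvsplit]; field_simp [hu, hv]; ring
    _ ≤ u ^ (-δ) - v ^ (-δ) := step

lemma exp_integral_bound {c t : ℝ} (hc : 0 < c) (ht : 0 ≤ t) :
    ∫⁻ s in Set.Ioc 0 t, ENNReal.ofReal (Real.exp (-(c*(t-s)))) ≤ ENNReal.ofReal (1/c) := by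
  have hcont : Continuous fun s : ℝ => Real.exp (-(c*(t-s))) := by continuity
  have hint : IntegrableOn (fun s : ℝ => Real.exp (-(c*(t-s)))) (Set.Ioc 0 t) :=
    hcont.integrableOn_Ioc
  rw [← ofReal_integral_eq_lintegral_ofReal hint
    (ae_of_all _ fun s => (Real.exp_pos _).le)]
  apply ENNReal.ofReal_le_ofReal
  have heq : ∫ s in Set.Ioc 0 t, Real.exp (-(c*(t-s))) = ∫ s in (0:ℝ)..t, Real.exp (-(c*(t-s))) :=
    (intervalIntegral.integral_of_le ht).symm
  rw [heq]
  have hderiv : ∀ s ∈ Set.uIcc (0:ℝ) t,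
      HasDerivAt (fun x : ℝ => Real.exp (-(c*(t-x))) / c) (Real.exp (-(c*(t-s)))) s := by
    intro s _
    have h1 : HasDerivAt (fun x : ℝ => -(c*(t-x))) c s := by
      have : HasDerivAt (fun x : ℝ => c * x - c * t) c s := by
        simpa using ((hasDerivAt_id s).const_mul c).sub_const (c*t)
      convert this using 2 with x
      ring
    have h2 := (h1.exp).div_const c
    simpa [mul_div_assoc, mul_div_cancel_right₀ _ hc.ne'] using h2
  rw [intervalIntegral.integral_eq_sub_of_hasDerivAt hderiv (hcont.intervalIntegrable 0 t)]
  simp only [sub_self, mul_zero, neg_zero, Real.exp_zero, sub_zero]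
  have : 0 < Real.exp (-(c*t)) / c := by positivity
  rw [one_div]
  linarith [this]

lemma coord_le_norm_latc {d : ℕ} (l : Fin d → ℤ) (i : Fin d) : |(l i : ℝ)| ≤ ‖latc l‖ := by
  have h := EuclideanSpace.norm_eq (latc l)
  have hc : (latc l) i = (l i : ℝ) := rfl
  rw [h]
  have : |(l i : ℝ)| = Real.sqrt (‖(latc l) i‖ ^ 2) := by
    rw [hc, Real.sqrt_sq_eq_abs]; simp
  rw [this]
  apply Real.sqrt_le_sqrt
  exact Finset.single_le_sum (f := fun j => ‖(latc l) j‖ ^ 2)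
    (fun j _ => by positivity) (Finset.mem_univ i)

lemma one_le_norm_latc {d : ℕ} {k : Fin d → ℤ} (hk : k ≠ 0) : 1 ≤ ‖latc k‖ := by
  obtain ⟨i, hi⟩ : ∃ i, k i ≠ 0 := by
    by_contra h
    push_neg at h
    exact hk (funext fun i => h i)
  have h1 : (1:ℝ) ≤ |(k i : ℝ)| := by
    have : (1:ℤ) ≤ |k i| := Int.one_le_abs hi
    calc (1:ℝ) ≤ (|k i| : ℤ) := by exact_mod_cast this
      _ = |(k i : ℝ)| := by push_cast; ring
  exact h1.trans (coord_le_norm_latc k i)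

lemma tsum_pi_pow : ∀ (d : ℕ) (g : ℤ → ENNReal),
    ∑' l : Fin d → ℤ, ∏ i, g (l i) = (∑' n : ℤ, g n) ^ d := by
  intro d
  induction d with
  | zero =>
    intro g
    simp only [Finset.univ_eq_empty, Finset.prod_empty, pow_zero]
    rw [tsum_eq_single (fun (_ : Fin 0) => (0:ℤ)) (fun b hb => absurd (Subsingleton.elim b _) hb)]
  | succ n ih =>
    intro g
    rw [← (Fin.consEquiv (fun _ => ℤ)).tsum_eq (fun l => ∏ i, g (l i))]
    have : ∀ p : ℤ × (Fin n → ℤ),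
        (∏ i, g (((Fin.consEquiv (fun _ => ℤ)) p) i)) = g p.1 * ∏ i, g (p.2 i) := by
      intro p
      rw [Fin.prod_univ_succ]
      rfl
    simp_rw [this]
    rw [show (∑' (c : ℤ × (Fin n → ℤ)), g c.1 * ∏ i, g (c.2 i))
        = ∑' (a : ℤ) (b : Fin n → ℤ), g a * ∏ i, g (b i) from
      ENNReal.tsum_prod' (f := fun p : ℤ × (Fin n → ℤ) => g p.1 * ∏ i, g (p.2 i))]
    simp_rw [ENNReal.tsum_mul_left (f := fun b : Fin n → ℤ => ∏ i, g (b i))]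
    rw [ENNReal.tsum_mul_right, ih g, pow_succ]
    ring

lemma exp_cube_nat_le {c : ℝ} (hc : 0 < c) (hc1 : c ≤ 1) (n : ℕ) :
    Real.exp (-(c * (n:ℝ) ^ ((1:ℝ)/3))) ≤ 2880 / c^6 * (1/((n:ℝ)+1)^2) := by
  have hc6 : (0:ℝ) < c ^ 6 := by positivity
  rcases Nat.eq_zero_or_pos n with h0 | h1
  · subst h0
    simp only [Nat.cast_zero, Real.rpow_natCast]
    rw [Real.zero_rpow (by norm_num), mul_zero, neg_zero, Real.exp_zero]
    have : c ^ 6 ≤ 1 := pow_le_one₀ hc.le hc1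
    rw [show ((0:ℝ)+1)^2 = 1 by norm_num, div_one, mul_one, le_div_iff₀ hc6]
    linarith
  · have hn1 : (1:ℝ) ≤ (n:ℝ) := by exact_mod_cast h1
    have hx : (0:ℝ) ≤ (n:ℝ) ^ ((1:ℝ)/3) := Real.rpow_nonneg (by positivity) _
    have key := pow_mul_exp_neg_le 6 hc hx
    have hpow : ((n:ℝ) ^ ((1:ℝ)/3)) ^ (6:ℕ) = (n:ℝ)^2 := by
      rw [← Real.rpow_natCast ((n:ℝ) ^ ((1:ℝ)/3)) 6, ← Real.rpow_mul (by positivity)]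
      norm_num
    rw [hpow] at key
    have hfact : ((6:ℕ)! : ℝ) = 720 := by norm_num [Nat.factorial]
    rw [hfact] at key
    have hn2 : (0:ℝ) < (n:ℝ)^2 := by positivity
    have hexp : Real.exp (-(c * (n:ℝ) ^ ((1:ℝ)/3))) ≤ 720 / c^6 / (n:ℝ)^2 := by
      rw [div_div, le_div_iff₀ (by positivity)]
      calc Real.exp (-(c * (n:ℝ) ^ ((1:ℝ)/3))) * (c^6 * (n:ℝ)^2)
          = (n:ℝ)^2 * Real.exp (-(c * (n:ℝ) ^ ((1:ℝ)/3))) * c^6 := by ring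
        _ ≤ 720 / c^6 * c^6 := by nlinarith [key, hc6]
        _ = 720 := by field_simp
    refine hexp.trans ?_
    have hsq : ((n:ℝ)+1)^2 ≤ 4 * (n:ℝ)^2 := by nlinarith
    rw [div_div, div_le_iff₀ (by positivity : (0:ℝ) < c^6 * (n:ℝ)^2)]
    have hcpos : 0 < ((n:ℝ)+1)^2 := by positivity
    rw [show (2880:ℝ) / c^6 * (1/((n:ℝ)+1)^2) * (c^6 * (n:ℝ)^2)
        = 2880 * ((n:ℝ)^2/((n:ℝ)+1)^2) from by field_simp]
    rw [show (720:ℝ) = 2880 * (1/4) from by norm_num]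
    apply mul_le_mul_of_nonneg_left ?_ (by norm_num : (0:ℝ) ≤ 2880)
    rw [div_le_div_iff₀ (by norm_num) hcpos]
    nlinarith

lemma summable_exp_cube {c : ℝ} (hc : 0 < c) (hc1 : c ≤ 1) :
    Summable (fun n : ℤ => Real.exp (-(c * |(n:ℝ)| ^ ((1:ℝ)/3)))) := by
  have hbase : Summable (fun n : ℕ => 2880 / c^6 * (1/((n:ℝ)+1)^2)) := by
    apply Summable.mul_left
    have h1 : Summable (fun n : ℕ => 1/((n:ℝ))^2) := by
      simpa using Real.summable_one_div_nat_pow.mpr (by norm_num : 1 < 2)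
    have := (summable_nat_add_iff 1).mpr h1
    simpa using this
  have hnat : Summable (fun n : ℕ => Real.exp (-(c * (n:ℝ) ^ ((1:ℝ)/3)))) :=
    Summable.of_nonneg_of_le (fun n => (Real.exp_pos _).le)
      (fun n => exp_cube_nat_le hc hc1 n) hbase
  apply Summable.of_nat_of_neg_add_one
  · simpa using hnat
  · have : ∀ n : ℕ, |((-(n+1) : ℤ) : ℝ)| = ((n+1 : ℕ) : ℝ) := by
      intro n; push_cast; rw [abs_neg, abs_of_nonneg (by positivity)]
    simp only [this]
    exact (summable_nat_add_iff 1).mpr hnat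

lemma tsum_latc_exp_le {d : ℕ} (hd : 1 ≤ d) {δ : ℝ} (hδ : 0 < δ) (hδ1 : δ ≤ 1) :
    ∑' l : {l : Fin d → ℤ // l ≠ 0}, ENNReal.ofReal (Real.exp (-(δ * ‖latc l.1‖ ^ ((1:ℝ)/3))))
      ≤ ENNReal.ofReal ((∑' n : ℤ, Real.exp (-(δ/d * |(n:ℝ)| ^ ((1:ℝ)/3)))) ^ d) := by
  have hd0 : (0:ℝ) < d := by exact_mod_cast hd
  have hc : 0 < δ/d := by positivity
  have hc1 : δ/d ≤ 1 := by
    rw [div_le_one hd0]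
    calc δ ≤ 1 := hδ1
      _ ≤ (d:ℝ) := by exact_mod_cast hd
  calc ∑' l : {l : Fin d → ℤ // l ≠ 0},
        ENNReal.ofReal (Real.exp (-(δ * ‖latc l.1‖ ^ ((1:ℝ)/3))))
      ≤ ∑' l : Fin d → ℤ, ENNReal.ofReal (Real.exp (-(δ * ‖latc l‖ ^ ((1:ℝ)/3)))) :=
        ENNReal.tsum_comp_le_tsum_of_injective Subtype.val_injective _
    _ ≤ ∑' l : Fin d → ℤ, ∏ i, ENNReal.ofReal (Real.exp (-(δ/(d:ℝ) * |(l i : ℝ)| ^ ((1:ℝ)/3)))) := by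
        apply ENNReal.tsum_le_tsum
        intro l
        rw [← ENNReal.ofReal_prod_of_nonneg (fun i _ => (Real.exp_pos _).le)]
        apply ENNReal.ofReal_le_ofReal
        rw [← Real.exp_sum]
        apply Real.exp_le_exp.mpr
        have hnl : 0 ≤ ‖latc l‖ := norm_nonneg _
        have hsum : ∑ i, |(l i : ℝ)| ^ ((1:ℝ)/3) ≤ (d:ℝ) * ‖latc l‖ ^ ((1:ℝ)/3) := by
          have : ∀ i : Fin d, |(l i : ℝ)| ^ ((1:ℝ)/3) ≤ ‖latc l‖ ^ ((1:ℝ)/3) := fun i =>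
            Real.rpow_le_rpow (abs_nonneg _) (coord_le_norm_latc l i) (by norm_num)
          calc ∑ i, |(l i : ℝ)| ^ ((1:ℝ)/3) ≤ ∑ _i : Fin d, ‖latc l‖ ^ ((1:ℝ)/3) :=
                Finset.sum_le_sum (fun i _ => this i)
            _ = (d:ℝ) * ‖latc l‖ ^ ((1:ℝ)/3) := by
                rw [Finset.sum_const, Finset.card_univ, Fintype.card_fin, nsmul_eq_mul]
        have hRHS : ∑ i, -(δ/(d:ℝ) * |(l i : ℝ)| ^ ((1:ℝ)/3))
            = -(δ/(d:ℝ) * ∑ i, |(l i : ℝ)| ^ ((1:ℝ)/3)) := by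
          rw [Finset.mul_sum, ← Finset.sum_neg_distrib]
        rw [hRHS]
        apply neg_le_neg
        calc δ/(d:ℝ) * ∑ i, |(l i : ℝ)| ^ ((1:ℝ)/3)
            ≤ δ/(d:ℝ) * ((d:ℝ) * ‖latc l‖ ^ ((1:ℝ)/3)) := mul_le_mul_of_nonneg_left hsum hc.le
          _ = δ * ‖latc l‖ ^ ((1:ℝ)/3) := by field_simp
    _ = (∑' n : ℤ, ENNReal.ofReal (Real.exp (-(δ/(d:ℝ) * |(n:ℝ)| ^ ((1:ℝ)/3))))) ^ d :=
        tsum_pi_pow d (fun n => ENNReal.ofReal (Real.exp (-(δ/(d:ℝ) * |(n:ℝ)| ^ ((1:ℝ)/3)))))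
    _ = ENNReal.ofReal ((∑' n : ℤ, Real.exp (-(δ/d * |(n:ℝ)| ^ ((1:ℝ)/3)))) ^ d) := by
        rw [← ENNReal.ofReal_tsum_of_nonneg (fun n => (Real.exp_pos _).le)
          (summable_exp_cube hc hc1)]
        rw [ENNReal.ofReal_pow (tsum_nonneg (fun n => (Real.exp_pos _).le))]


lemma claim_lam_aux {δ s t : ℝ} (r lam1 : ℝ) (hδ0 : 0 < δ) (hs0 : 0 < s) (hst : s ≤ t) :
    lamW lam1 δ t r - lamW lam1 δ s r
      ≤ -((δ^2 * (1+t) ^ (-(1+δ)) * jap r ^ ((1:ℝ)/3)) * (t-s)) := by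
  set R13 : ℝ := jap r ^ ((1:ℝ)/3) with hR13def
  set ρ : ℝ := jap r ^ (-(2:ℝ)/3) with hρdef
  have hρ0 : (0:ℝ) ≤ ρ := Real.rpow_nonneg (jap_pos _).le _
  have hR130 : (0:ℝ) ≤ R13 := Real.rpow_nonneg (jap_pos _).le _
  have hsρ : (0:ℝ) < 1 + s*ρ := by nlinarith
  have hstρ : 1 + s*ρ ≤ 1 + t*ρ := by nlinarith
  have hexpand : lamW lam1 δ t r - lamW lam1 δ s r
      = δ * R13 * ((1+t)^(-δ) - (1+s)^(-δ))
        + δ * R13 * ((1 + t*ρ)^(-δ) - (1 + s*ρ)^(-δ)) := by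
    simp only [lamW]; ring
  have h2nd : (1 + t*ρ)^(-δ) - (1 + s*ρ)^(-δ) ≤ 0 := by
    have : (1 + t*ρ)^(-δ) ≤ (1 + s*ρ)^(-δ) :=
      Real.rpow_le_rpow_of_nonpos hsρ hstρ (by linarith)
    linarith
  have h1st : (1+t)^(-δ) - (1+s)^(-δ) ≤ -(δ*(t-s)*(1+t)^(-(1+δ))) := by
    have := key_decay hδ0 hs0.le hst
    linarith
  rw [hexpand]
  have hδR : (0:ℝ) ≤ δ * R13 := by positivity
  calc δ * R13 * ((1+t)^(-δ) - (1+s)^(-δ)) + δ * R13 * ((1 + t*ρ)^(-δ) - (1 + s*ρ)^(-δ))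
      ≤ δ * R13 * (-(δ*(t-s)*(1+t)^(-(1+δ)))) + δ * R13 * 0 :=
        add_le_add (mul_le_mul_of_nonneg_left h1st hδR) (mul_le_mul_of_nonneg_left h2nd hδR)
    _ = -((δ^2 * (1+t) ^ (-(1+δ)) * R13) * (t-s)) := by ring

set_option maxHeartbeats 2000000 in
lemma claimB_aux (d : ℕ) {δ c t u w a0 R13 : ℝ} {N : ℕ}
    (hδ0 : 0 < δ) (hδ200 : δ ≤ 1/200) (hc : c = δ^2/32) (hN : N = 36*d+12)
    (ht0 : 0 < t) (hu1 : 1 ≤ u) (hw1 : 1 ≤ w) (hwt : t ≤ w) (hw1t : w ≤ 1+t)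
    (hwsq : w^2 = 1+t^2) (hR13uw : u * w ^ ((1:ℝ)/3) ≤ R13)
    (ha0def : a0 = δ^2 * (1+t) ^ (-(1+δ)) * R13) :
    u^2 * w^(6*d) * t^2 * Real.exp (-(a0*(t/2)))
      ≤ 2^(3*d+1)*(16/δ^2)^2 + (2/c^2)*((N ! : ℝ)/c^N) := by
  have hc0 : 0 < c := by rw [hc]; positivity
  have hu0 : (0:ℝ) < u := by linarith
  have hw0 : (0:ℝ) < w := by linarith
  have h1t0 : (0:ℝ) < 1 + t := by linarith
  have hw2t : 1 + t ≤ 2*w := by linarith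
  have hw131 : 1 ≤ w ^ ((1:ℝ)/3) := Real.one_le_rpow hw1 (by norm_num)
  have hR131 : 1 ≤ R13 := by nlinarith
  have hCB2 : (0:ℝ) ≤ (2/c^2)*((N ! : ℝ)/c^N) := by positivity
  have hCB1 : (0:ℝ) ≤ 2^(3*d+1)*(16/δ^2)^2 := by positivity
  have hfact2 : ((2:ℕ)! : ℝ) = 2 := by norm_num [Nat.factorial]
  rcases le_or_gt t 1 with ht1 | ht1
  · -- small time
    have e2 : (1:ℝ)/4 ≤ (1+t) ^ (-(1+δ)) := by
      have b1 : ((2:ℝ)) ^ (-(1+δ)) ≤ (1+t) ^ (-(1+δ)) :=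
        Real.rpow_le_rpow_of_nonpos h1t0 (by linarith) (by linarith)
      have b2 : ((2:ℝ)) ^ (-(2:ℝ)) ≤ (2:ℝ) ^ (-(1+δ)) :=
        Real.rpow_le_rpow_of_exponent_le one_le_two (by linarith)
      have b3 : ((2:ℝ)) ^ (-(2:ℝ)) = 1/4 := by
        rw [show (-(2:ℝ)) = ((-2 : ℤ) : ℝ) by norm_num, Real.rpow_intCast]; norm_num
      calc (1:ℝ)/4 = ((2:ℝ)) ^ (-(2:ℝ)) := b3.symm
        _ ≤ ((2:ℝ)) ^ (-(1+δ)) := b2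
        _ ≤ (1+t) ^ (-(1+δ)) := b1
    have e3 : u ≤ R13 := le_trans (le_mul_of_one_le_right hu0.le hw131) hR13uw
    have eA : δ^2/4 * u ≤ a0 := by
      rw [ha0def]
      calc δ^2/4 * u = δ^2 * (1/4) * u := by ring
        _ ≤ δ^2 * ((1+t)^(-(1+δ))) * R13 :=
            mul_le_mul (mul_le_mul_of_nonneg_left e2 (by positivity)) e3 hu0.le
              (by positivity)
    have eB : δ^2/8 * (t*u) ≤ a0 * (t/2) := by
      have h := mul_le_mul_of_nonneg_right eA (by positivity : (0:ℝ) ≤ t/2)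
      calc δ^2/8 * (t*u) = δ^2/4 * u * (t/2) := by ring
        _ ≤ a0 * (t/2) := h
    have hexp : Real.exp (-(a0*(t/2))) ≤ Real.exp (-(δ^2/8*(t*u))) :=
      Real.exp_le_exp.mpr (by linarith)
    have hke := pow_mul_exp_neg_le 2 (c := δ^2/8) (x := t*u) (by positivity) (by positivity)
    rw [hfact2] at hke
    have hw6 : w^(6*d) ≤ 2^(3*d) := by
      have h62 : w^(6*d) = (w^2)^(3*d) := by rw [← pow_mul]; congr 1; ring
      rw [h62]
      exact pow_le_pow_left₀ (by positivity) (by nlinarith) (3*d)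
    calc u^2 * w^(6*d) * t^2 * Real.exp (-(a0*(t/2)))
        = (t*u)^2 * Real.exp (-(a0*(t/2))) * w^(6*d) := by ring
      _ ≤ (t*u)^2 * Real.exp (-(δ^2/8*(t*u))) * 2^(3*d) :=
          mul_le_mul (mul_le_mul_of_nonneg_left hexp (by positivity)) hw6 (by positivity)
            (by positivity)
      _ ≤ (2/(δ^2/8)^2) * 2^(3*d) := mul_le_mul_of_nonneg_right hke (by positivity)
      _ ≤ (2*(16/δ^2)^2) * 2^(3*d) := by
          apply mul_le_mul_of_nonneg_right ?_ (by positivity)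
          rw [div_le_iff₀ (by positivity : (0:ℝ) < (δ^2/8)^2)]
          have hmm : (16/δ^2) * (δ^2/8) = 2 := by
            field_simp
            norm_num
          have h4 : (16/δ^2)^2 * (δ^2/8)^2 = 4 := by rw [← mul_pow, hmm]; norm_num
          calc (2:ℝ) ≤ 8 := by norm_num
            _ = 2*((16/δ^2)^2*(δ^2/8)^2) := by rw [h4]; norm_num
            _ = 2*(16/δ^2)^2*(δ^2/8)^2 := by ring
      _ = 2^(3*d+1)*(16/δ^2)^2 := by ring
      _ ≤ 2^(3*d+1)*(16/δ^2)^2 + (2/c^2)*((N ! : ℝ)/c^N) := by linarith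
  · -- large time
    have b1 : (2*w) ^ (-(7:ℝ)/6) ≤ (1+t) ^ (-(1+δ)) := by
      have c1 : (2*w) ^ (-(1+δ)) ≤ (1+t) ^ (-(1+δ)) :=
        Real.rpow_le_rpow_of_nonpos h1t0 hw2t (by linarith)
      have c2 : (2*w) ^ (-(7:ℝ)/6) ≤ (2*w) ^ (-(1+δ)) :=
        Real.rpow_le_rpow_of_exponent_le (by linarith) (by linarith)
      linarith
    have b2 : (1/4) * w ^ (-(7:ℝ)/6) ≤ (2*w) ^ (-(7:ℝ)/6) := by
      rw [Real.mul_rpow (by norm_num) hw0.le]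
      have d12 : (1/4 : ℝ) ≤ (2:ℝ) ^ (-(7:ℝ)/6) := by
        have d1 : ((2:ℝ)) ^ (-(2:ℝ)) ≤ (2:ℝ) ^ (-(7:ℝ)/6) :=
          Real.rpow_le_rpow_of_exponent_le one_le_two (by norm_num)
        have d2 : ((2:ℝ)) ^ (-(2:ℝ)) = 1/4 := by
          rw [show (-(2:ℝ)) = ((-2 : ℤ) : ℝ) by norm_num, Real.rpow_intCast]; norm_num
        linarith
      exact mul_le_mul_of_nonneg_right d12 (Real.rpow_nonneg hw0.le _)
    have hw161 : 1 ≤ w ^ ((1:ℝ)/6) := Real.one_le_rpow hw1 (by norm_num)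
    have hws : w * w ^ (-(7:ℝ)/6) * w ^ ((1:ℝ)/3) = w ^ ((1:ℝ)/6) := by
      rw [mul_assoc, ← Real.rpow_add hw0,
        show (-(7:ℝ)/6 + (1:ℝ)/3) = -(5:ℝ)/6 by norm_num,
        show ((1:ℝ)/6) = 1 + (-(5:ℝ)/6) by norm_num, Real.rpow_add hw0, Real.rpow_one]
    have hwm : (0:ℝ) < w ^ (-(7:ℝ)/6) := Real.rpow_pos_of_pos hw0 _
    have hexpo : c * (u + w ^ ((1:ℝ)/6)) ≤ a0 * (t/2) := by
      have m1 : δ^2/2 * t * ((1/4) * w ^ (-(7:ℝ)/6)) * (u * w ^ ((1:ℝ)/3)) ≤ a0*(t/2) := by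
        rw [ha0def, show δ^2 * (1+t)^(-(1+δ)) * R13 * (t/2)
            = δ^2/2 * t * ((1+t)^(-(1+δ))) * R13 by ring]
        exact mul_le_mul (mul_le_mul_of_nonneg_left (b2.trans b1) (by positivity)) hR13uw
          (by positivity) (by positivity)
      have m2 : δ^2/16 * (u * w ^ ((1:ℝ)/6))
          ≤ δ^2/2 * t * ((1/4) * w ^ (-(7:ℝ)/6)) * (u * w ^ ((1:ℝ)/3)) := by
        have hrearr : δ^2/2 * t * ((1/4) * w ^ (-(7:ℝ)/6)) * (u * w ^ ((1:ℝ)/3))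
            = δ^2/8 * t * (w ^ (-(7:ℝ)/6) * w ^ ((1:ℝ)/3)) * u := by ring
        rw [hrearr]
        have hp : (0:ℝ) < w ^ (-(7:ℝ)/6) * w ^ ((1:ℝ)/3) := by positivity
        have hm : δ^2/8 * (w/2) * (w ^ (-(7:ℝ)/6) * w ^ ((1:ℝ)/3)) * u
            ≤ δ^2/8 * t * (w ^ (-(7:ℝ)/6) * w ^ ((1:ℝ)/3)) * u := by
          apply mul_le_mul_of_nonneg_right ?_ hu0.le
          apply mul_le_mul_of_nonneg_right ?_ hp.le
          apply mul_le_mul_of_nonneg_left (by linarith : w/2 ≤ t) (by positivity)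
        have heq : δ^2/8 * (w/2) * (w ^ (-(7:ℝ)/6) * w ^ ((1:ℝ)/3)) * u
            = δ^2/16 * (u * w ^ ((1:ℝ)/6)) := by
          rw [← hws]; ring
        linarith
      have m3 : c * (u + w ^ ((1:ℝ)/6)) ≤ δ^2/16 * (u * w ^ ((1:ℝ)/6)) := by
        rw [hc]
        have i1 : u ≤ u * w ^ ((1:ℝ)/6) := le_mul_of_one_le_right (by linarith) hw161
        have i2 : w ^ ((1:ℝ)/6) ≤ u * w ^ ((1:ℝ)/6) :=
          le_mul_of_one_le_left (by positivity) hu1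
        calc δ^2/32 * (u + w ^ ((1:ℝ)/6))
            ≤ δ^2/32 * (u * w ^ ((1:ℝ)/6) + u * w ^ ((1:ℝ)/6)) := by
              apply mul_le_mul_of_nonneg_left (by linarith) (by positivity)
          _ = δ^2/16 * (u * w ^ ((1:ℝ)/6)) := by ring
      linarith
    have hsplitexp : Real.exp (-(a0*(t/2)))
        ≤ Real.exp (-(c*u)) * Real.exp (-(c * w ^ ((1:ℝ)/6))) := by
      rw [← Real.exp_add]
      apply Real.exp_le_exp.mpr
      linarith [hexpo]
    have hu2e := pow_mul_exp_neg_le 2 (c := c) (x := u) hc0 hu0.le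
    rw [hfact2] at hu2e
    have hwNe := pow_mul_exp_neg_le N (c := c) (x := w ^ ((1:ℝ)/6)) hc0 (by positivity)
    have hwN : w^(6*d+2) = (w ^ ((1:ℝ)/6))^N := by
      rw [← Real.rpow_natCast (w ^ ((1:ℝ)/6)) N, ← Real.rpow_mul hw0.le,
        ← Real.rpow_natCast w (6*d+2)]
      congr 1
      rw [hN]; push_cast; ring
    calc u^2 * w^(6*d) * t^2 * Real.exp (-(a0*(t/2)))
        ≤ u^2 * w^(6*d) * w^2 * (Real.exp (-(c*u)) * Real.exp (-(c * w ^ ((1:ℝ)/6)))) := by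
          apply mul_le_mul ?_ hsplitexp (Real.exp_pos _).le (by positivity)
          have : t^2 ≤ w^2 := by nlinarith
          nlinarith [sq_nonneg u, pow_nonneg hw0.le (6*d), pow_pos hu0 2,
            pow_pos (pow_pos hw0 2) 1, mul_nonneg (sq_nonneg u) (pow_nonneg hw0.le (6*d))]
      _ = (u^2 * Real.exp (-(c*u))) * (w^(6*d+2) * Real.exp (-(c * w ^ ((1:ℝ)/6)))) := by
          ring
      _ ≤ (2/c^2) * ((N ! : ℝ)/c^N) := by
          apply mul_le_mul hu2e ?_ (by positivity) (by positivity)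
          rw [hwN]; exact hwNe
      _ ≤ 2^(3*d+1)*(16/δ^2)^2 + (2/c^2)*((N ! : ℝ)/c^N) := by linarith

set_option maxHeartbeats 2000000 in
lemma claimC_aux (d : ℕ) {δ t u w a0 R13 : ℝ} {M : ℕ}
    (hδ0 : 0 < δ) (hδ200 : δ ≤ 1/200) (hM : M = 18*d+9)
    (ht0 : 0 < t) (hu1 : 1 ≤ u) (hw1 : 1 ≤ w) (hwt : t ≤ w) (hw1t : w ≤ 1+t)
    (hR13uw : u * w ^ ((1:ℝ)/3) ≤ R13)
    (ha0def : a0 = δ^2 * (1+t) ^ (-(1+δ)) * R13) (ha00 : 0 < a0) :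
    u^2 * w^(6*d) * Real.exp (-(δ/2 * t ^ ((1:ℝ)/3))) * (2/a0^2)
      ≤ 16/δ^4 * 2^M * (1 + (M ! : ℝ)/(δ/2)^M) := by
  have hu0 : (0:ℝ) < u := by linarith
  have hw0 : (0:ℝ) < w := by linarith
  have h1t0 : (0:ℝ) < 1 + t := by linarith
  have hw2t : 1 + t ≤ 2*w := by linarith
  have ht130 : (0:ℝ) ≤ t ^ ((1:ℝ)/3) := Real.rpow_nonneg ht0.le _
  have hw131 : 1 ≤ w ^ ((1:ℝ)/3) := Real.one_le_rpow hw1 (by norm_num)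
  have h2w1 : (1:ℝ) ≤ 2*w := by linarith
  have h2wp : (0:ℝ) < (2*w) ^ (-(1+δ)) := Real.rpow_pos_of_pos (by linarith) _
  set q : ℝ := δ^2 * ((2*w) ^ (-(1+δ))) * (u * w ^ ((1:ℝ)/3)) with hqdef
  have hq0 : 0 < q := by rw [hqdef]; positivity
  have hqa : q ≤ a0 := by
    rw [hqdef, ha0def]
    have b1 : (2*w) ^ (-(1+δ)) ≤ (1+t) ^ (-(1+δ)) :=
      Real.rpow_le_rpow_of_nonpos h1t0 hw2t (by linarith)
    exact mul_le_mul (mul_le_mul_of_nonneg_left b1 (by positivity)) hR13uw (by positivity)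
      (by positivity)
  have hstep1 : 2/a0^2 ≤ 2/q^2 := by
    have hq2a : q^2 ≤ a0^2 := pow_le_pow_left₀ hq0.le hqa 2
    rw [div_le_div_iff₀ (by positivity) (by positivity)]
    nlinarith [hq2a]
  have hq2 : δ^4 * u^2 / (8*w^3) ≤ q^2 := by
    have hsq : q^2 = δ^4 * ((2*w) ^ (-(1+δ)))^2 * (u^2 * (w ^ ((1:ℝ)/3))^2) := by
      rw [hqdef]; ring
    have hz : ((2*w) ^ (-(1+δ)))^2 = (2*w) ^ (-(2+2*δ)) := by
      rw [← Real.rpow_natCast ((2*w) ^ (-(1+δ))) 2, ← Real.rpow_mul (by linarith)]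
      congr 1; ring
    have hz2 : (2*w) ^ (-(3:ℝ)) ≤ (2*w) ^ (-(2+2*δ)) :=
      Real.rpow_le_rpow_of_exponent_le h2w1 (by linarith)
    have hz3 : (2*w) ^ (-(3:ℝ)) = 1/(8*w^3) := by
      rw [show (-(3:ℝ)) = ((-3 : ℤ) : ℝ) by norm_num, Real.rpow_intCast]
      have hzz : ((2*w):ℝ)^(-3:ℤ) = ((2*w)^(3:ℕ))⁻¹ := by
        rw [show (-3:ℤ) = -(3:ℕ) from rfl, zpow_neg, zpow_natCast]
      rw [hzz, one_div]
      congr 1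
      ring
    have hw132 : 1 ≤ (w ^ ((1:ℝ)/3))^2 := by nlinarith
    rw [hsq, hz]
    calc δ^4*u^2/(8*w^3) = δ^4 * (1/(8*w^3)) * (u^2 * 1) := by ring
      _ ≤ δ^4 * ((2*w) ^ (-(2+2*δ))) * (u^2 * (w ^ ((1:ℝ)/3))^2) := by
          apply mul_le_mul (mul_le_mul_of_nonneg_left (hz3 ▸ hz2) (by positivity))
            (by nlinarith) (by positivity) (by positivity)
  have hstep2 : 2/q^2 ≤ 16*w^3/(δ^4*u^2) := by
    rw [div_le_div_iff₀ (by positivity) (by positivity)]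
    have hmul := mul_le_mul_of_nonneg_left hq2 (by positivity : (0:ℝ) ≤ 16*w^3)
    have heq : 16*w^3 * (δ^4*u^2/(8*w^3)) = 2*(δ^4*u^2) := by
      field_simp
      ring
    linarith [heq ▸ hmul]
  have hcube : w ≤ (1 + t ^ ((1:ℝ)/3))^3 := by
    have ht133 : (t ^ ((1:ℝ)/3))^3 = t := by
      rw [← Real.rpow_natCast (t ^ ((1:ℝ)/3)) 3, ← Real.rpow_mul ht0.le]; norm_num
    nlinarith
  have hwM : w^(6*d+3) ≤ (1 + t ^ ((1:ℝ)/3))^M := by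
    calc w^(6*d+3) ≤ ((1 + t ^ ((1:ℝ)/3))^3)^(6*d+3) := pow_le_pow_left₀ hw0.le hcube _
      _ = (1 + t ^ ((1:ℝ)/3))^M := by rw [← pow_mul, hM]; congr 1; ring
  calc u^2 * w^(6*d) * Real.exp (-(δ/2 * t ^ ((1:ℝ)/3))) * (2/a0^2)
      ≤ u^2 * w^(6*d) * Real.exp (-(δ/2 * t ^ ((1:ℝ)/3))) * (16*w^3/(δ^4*u^2)) :=
        mul_le_mul_of_nonneg_left (hstep1.trans hstep2) (by positivity)
    _ = 16/δ^4 * (w^(6*d+3) * Real.exp (-(δ/2 * t ^ ((1:ℝ)/3)))) := by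
        rw [show w^(6*d+3) = w^(6*d)*w^3 from by rw [pow_add]]
        field_simp
    _ ≤ 16/δ^4 * ((1 + t ^ ((1:ℝ)/3))^M * Real.exp (-(δ/2 * t ^ ((1:ℝ)/3)))) := by
        apply mul_le_mul_of_nonneg_left
          (mul_le_mul_of_nonneg_right hwM (Real.exp_pos _).le) (by positivity)
    _ ≤ 16/δ^4 * (2^M*(1 + (M ! : ℝ)/(δ/2)^M)) := by
        apply mul_le_mul_of_nonneg_left
          (one_add_pow_mul_exp_neg M (by positivity) ht130) (by positivity)
    _ = 16/δ^4 * 2^M * (1 + (M ! : ℝ)/(δ/2)^M) := by ring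

set_option maxHeartbeats 2000000 in
lemma pointwise_aux (d : ℕ) {δ β t s a w u L a0 lam1 : ℝ}
    (hδ0 : 0 < δ) (hβ1 : 1/2 ≤ β) (hβ2 : β ≤ 1)
    (ha1 : 1 ≤ a) (hL1 : 1 ≤ L) (hw1 : 1 ≤ w)
    (hs0 : 0 < s) (hst : s ≤ t)
    (hu : u = a ^ ((1:ℝ)/3)) (ha00 : 0 < a0)
    (hΔ : lamW lam1 δ t (a*w) - lamW lam1 δ s (a*w) ≤ -(a0*(t-s))) :
    (|t - s| * a ^ (1-β) * w ^ (6*d)) / (L ^ (1-β) * jap s ^ (6*d)) *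
      Real.exp (lamW lam1 δ t (a*w) - lamW lam1 δ s (a*w)) *
      Real.exp (-δ * (s ^ ((1:ℝ)/3) + L ^ ((1:ℝ)/3)))
    ≤ (t * (u^2 * w^(6*d)) * Real.exp (-(a0*(t/2)))
        + ((u^2 * w^(6*d)) * Real.exp (-(δ/2 * t ^ ((1:ℝ)/3))) * (1/a0))
          * Real.exp (-(a0/2*(t-s))))
      * Real.exp (-(δ * L ^ ((1:ℝ)/3))) := by
  have ha0 : (0:ℝ) < a := by linarith
  have hw0 : (0:ℝ) < w := by linarith
  have ht0 : (0:ℝ) < t := lt_of_lt_of_le hs0 hst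
  have hu1 : 1 ≤ u := by rw [hu]; exact Real.one_le_rpow ha1 (by norm_num)
  have hu0 : (0:ℝ) < u := by linarith
  set P : ℝ := u^2 * w^(6*d) with hPdef
  have hP0 : 0 < P := by rw [hPdef]; positivity
  set E : ℝ := Real.exp (-(δ * L ^ ((1:ℝ)/3))) with hEdef
  have hE0 : 0 < E := Real.exp_pos _
  set B1 : ℝ := t * P * Real.exp (-(a0*(t/2))) with hB1def
  set B2 : ℝ := P * Real.exp (-(δ/2 * t ^ ((1:ℝ)/3))) * (1/a0) with hB2def
  have hB10 : 0 ≤ B1 := by rw [hB1def]; positivity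
  have hB20 : 0 ≤ B2 := by rw [hB2def]; positivity
  have hu2 : a ^ ((2:ℝ)/3) = u^2 := by
    rw [hu, ← Real.rpow_natCast (a ^ ((1:ℝ)/3)) 2, ← Real.rpow_mul ha0.le]; norm_num
  have hsplit : Real.exp (-δ * (s ^ ((1:ℝ)/3) + L ^ ((1:ℝ)/3)))
      = Real.exp (-(δ * s ^ ((1:ℝ)/3))) * E := by
    rw [hEdef, ← Real.exp_add]; congr 1; ring
  have hfrac : (|t - s| * a ^ (1-β) * w ^ (6*d)) / (L ^ (1-β) * jap s ^ (6*d))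
      ≤ (t-s) * P := by
    have habs : |t - s| = t - s := abs_of_nonneg (by linarith)
    have hden : 1 ≤ L ^ (1-β) * jap s ^ (6*d) :=
      one_le_mul_of_one_le_of_one_le (Real.one_le_rpow hL1 (by linarith))
        (one_le_pow₀ (one_le_jap s))
    have hnum0 : 0 ≤ |t-s| * a ^ (1-β) * w ^ (6*d) :=
      mul_nonneg (mul_nonneg (abs_nonneg _) (Real.rpow_nonneg ha0.le _))
        (pow_nonneg hw0.le _)
    calc (|t - s| * a ^ (1-β) * w ^ (6*d)) / (L ^ (1-β) * jap s ^ (6*d))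
        ≤ |t - s| * a ^ (1-β) * w ^ (6*d) := div_le_self hnum0 hden
      _ = (t-s) * a^(1-β) * w^(6*d) := by rw [habs]
      _ ≤ (t-s) * u^2 * w^(6*d) := by
          have h5 : a^(1-β) ≤ u^2 := by
            rw [← hu2]; exact Real.rpow_le_rpow_of_exponent_le ha1 (by linarith)
          have hts : 0 ≤ t - s := by linarith
          apply mul_le_mul_of_nonneg_right ?_ (pow_nonneg hw0.le _)
          exact mul_le_mul_of_nonneg_left h5 hts
      _ = (t-s) * P := by rw [hPdef]; ring
  have hexpΔ : Real.exp (lamW lam1 δ t (a*w) - lamW lam1 δ s (a*w))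
      ≤ Real.exp (-(a0*(t-s))) := Real.exp_le_exp.mpr hΔ
  have hfrac0 : 0 ≤ (|t - s| * a ^ (1-β) * w ^ (6*d)) / (L ^ (1-β) * jap s ^ (6*d)) := by
    apply div_nonneg
    · exact mul_nonneg (mul_nonneg (abs_nonneg _) (Real.rpow_nonneg ha0.le _))
        (pow_nonneg hw0.le _)
    · exact mul_nonneg (Real.rpow_nonneg (by linarith) _) (pow_nonneg (jap_pos s).le _)
  rw [hsplit]
  have hG : (|t - s| * a ^ (1-β) * w ^ (6*d)) / (L ^ (1-β) * jap s ^ (6*d)) *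
        Real.exp (lamW lam1 δ t (a*w) - lamW lam1 δ s (a*w)) *
        (Real.exp (-(δ * s ^ ((1:ℝ)/3))) * E)
      ≤ ((t-s) * P) * Real.exp (-(a0*(t-s))) * (Real.exp (-(δ * s ^ ((1:ℝ)/3))) * E) := by
    apply mul_le_mul_of_nonneg_right ?_ (by positivity)
    exact mul_le_mul hfrac hexpΔ (Real.exp_pos _).le
      (mul_nonneg (by linarith) hP0.le)
  refine hG.trans ?_
  rcases le_or_gt s (t/2) with hcase | hcase
  · -- s ≤ t/2
    have e1 : Real.exp (-(a0*(t-s))) ≤ Real.exp (-(a0*(t/2))) := by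
      apply Real.exp_le_exp.mpr; nlinarith
    have e2 : Real.exp (-(δ * s ^ ((1:ℝ)/3))) ≤ 1 := by
      apply Real.exp_le_one_iff.mpr
      have : 0 ≤ s ^ ((1:ℝ)/3) := Real.rpow_nonneg hs0.le _
      nlinarith
    calc ((t-s) * P) * Real.exp (-(a0*(t-s))) * (Real.exp (-(δ * s ^ ((1:ℝ)/3))) * E)
        ≤ (t * P) * Real.exp (-(a0*(t/2))) * (1 * E) := by
          apply mul_le_mul ?_ ?_ (by positivity) (by positivity)
          · exact mul_le_mul (mul_le_mul_of_nonneg_right (by linarith : t - s ≤ t) hP0.le)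
              e1 (Real.exp_pos _).le (by positivity)
          · exact mul_le_mul_of_nonneg_right e2 hE0.le
      _ = B1 * E := by rw [hB1def]; ring
      _ ≤ (B1 + B2 * Real.exp (-(a0/2*(t-s)))) * E := by
          have h9 : 0 ≤ B2 * Real.exp (-(a0/2*(t-s))) :=
            mul_nonneg hB20 (Real.exp_pos _).le
          apply mul_le_mul_of_nonneg_right ?_ hE0.le
          linarith
  · -- t/2 < s
    have h1 : (t-s) * Real.exp (-(a0*(t-s))) ≤ (1/a0) * Real.exp (-(a0/2*(t-s))) := by
      have hx : 0 ≤ a0*(t-s) := mul_nonneg ha00.le (by linarith)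
      have hlin := lin_mul_exp_neg hx
      have heq : a0*(t-s)/2 = a0/2*(t-s) := by ring
      rw [heq] at hlin
      calc (t-s) * Real.exp (-(a0*(t-s)))
          = (1/a0) * (a0*(t-s) * Real.exp (-(a0*(t-s)))) := by
            field_simp
        _ ≤ (1/a0) * Real.exp (-(a0/2*(t-s))) :=
            mul_le_mul_of_nonneg_left hlin (by positivity)
    have h2 : Real.exp (-(δ * s ^ ((1:ℝ)/3))) ≤ Real.exp (-(δ/2 * t ^ ((1:ℝ)/3))) := by
      apply Real.exp_le_exp.mpr
      have hs13 : t ^ ((1:ℝ)/3) / 2 ≤ s ^ ((1:ℝ)/3) := by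
        have e3 : (t/2) ^ ((1:ℝ)/3) ≤ s ^ ((1:ℝ)/3) :=
          Real.rpow_le_rpow (by linarith) (by linarith) (by norm_num)
        have e4 : (t/2) ^ ((1:ℝ)/3) = t ^ ((1:ℝ)/3) / 2 ^ ((1:ℝ)/3) :=
          Real.div_rpow ht0.le (by norm_num : (0:ℝ) ≤ 2) ((1:ℝ)/3)
        have e5 : (2:ℝ) ^ ((1:ℝ)/3) ≤ 2 := by
          calc (2:ℝ) ^ ((1:ℝ)/3) ≤ 2 ^ (1:ℝ) :=
                Real.rpow_le_rpow_of_exponent_le one_le_two (by norm_num)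
            _ = 2 := Real.rpow_one 2
        have ht13nn : 0 ≤ t ^ ((1:ℝ)/3) := Real.rpow_nonneg ht0.le _
        have e6 : t ^ ((1:ℝ)/3) / 2 ≤ t ^ ((1:ℝ)/3) / 2 ^ ((1:ℝ)/3) := by
          apply div_le_div_of_nonneg_left ht13nn (by positivity) e5
        linarith [e4 ▸ e3]
      nlinarith
    calc ((t-s) * P) * Real.exp (-(a0*(t-s))) * (Real.exp (-(δ * s ^ ((1:ℝ)/3))) * E)
        = ((t-s) * Real.exp (-(a0*(t-s))))
            * (P * (Real.exp (-(δ * s ^ ((1:ℝ)/3))) * E)) := by ring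
      _ ≤ ((1/a0) * Real.exp (-(a0/2*(t-s))))
            * (P * (Real.exp (-(δ/2 * t ^ ((1:ℝ)/3))) * E)) := by
          apply mul_le_mul h1 ?_ ?_ (by positivity)
          · exact mul_le_mul_of_nonneg_left
              (mul_le_mul_of_nonneg_right h2 hE0.le) hP0.le
          · positivity
      _ = B2 * Real.exp (-(a0/2*(t-s))) * E := by rw [hB2def]; ring
      _ ≤ (B1 + B2 * Real.exp (-(a0/2*(t-s)))) * E := by
          apply mul_le_mul_of_nonneg_right ?_ hE0.le
          have h9 : 0 ≤ B2 * Real.exp (-(a0/2*(t-s))) :=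
            mul_nonneg hB20 (Real.exp_pos _).le
          linarith

set_option maxHeartbeats 1000000 in
lemma integral_bound_aux {B1 B2 a0 E t : ℝ} (hB1 : 0 ≤ B1) (hB2 : 0 ≤ B2) (ha0 : 0 < a0)
    (ht : 0 ≤ t) (hE : 0 ≤ E) :
    (∫⁻ s in Set.Ioc (0:ℝ) t,
        ENNReal.ofReal ((B1 + B2 * Real.exp (-(a0/2*(t-s)))) * E))
      ≤ ENNReal.ofReal ((B1*t + B2*(2/a0)) * E) := by
  have hae : ∀ s : ℝ, 0 ≤ B1 + B2 * Real.exp (-(a0/2*(t-s))) := fun s =>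
    add_nonneg hB1 (mul_nonneg hB2 (Real.exp_pos _).le)
  have step1 : (fun s : ℝ => ENNReal.ofReal ((B1 + B2 * Real.exp (-(a0/2*(t-s)))) * E))
      = fun s : ℝ => ENNReal.ofReal (B1 + B2 * Real.exp (-(a0/2*(t-s)))) * ENNReal.ofReal E :=
    funext fun s => ENNReal.ofReal_mul (hae s)
  rw [step1, lintegral_mul_const' _ _ ENNReal.ofReal_ne_top]
  have step2 : (∫⁻ s in Set.Ioc (0:ℝ) t, ENNReal.ofReal (B1 + B2 * Real.exp (-(a0/2*(t-s)))))
      ≤ ENNReal.ofReal (B1*t + B2*(2/a0)) := by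
    have e1 : (fun s : ℝ => ENNReal.ofReal (B1 + B2 * Real.exp (-(a0/2*(t-s)))))
        = fun s : ℝ => ENNReal.ofReal B1
            + ENNReal.ofReal B2 * ENNReal.ofReal (Real.exp (-(a0/2*(t-s)))) :=
      funext fun s => by
        rw [ENNReal.ofReal_add hB1 (mul_nonneg hB2 (Real.exp_pos _).le),
          ENNReal.ofReal_mul hB2]
    rw [e1, lintegral_add_left measurable_const, setLIntegral_const,
      lintegral_const_mul' _ _ ENNReal.ofReal_ne_top, Real.volume_Ioc, sub_zero]
    have e2 : ∫⁻ s in Set.Ioc (0:ℝ) t, ENNReal.ofReal (Real.exp (-(a0/2*(t-s))))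
        ≤ ENNReal.ofReal (2/a0) := by
      have := exp_integral_bound (c := a0/2) (by positivity) ht
      rwa [show 1/(a0/2) = 2/a0 by field_simp] at this
    calc ENNReal.ofReal B1 * ENNReal.ofReal t
          + ENNReal.ofReal B2 * ∫⁻ s in Set.Ioc (0:ℝ) t,
              ENNReal.ofReal (Real.exp (-(a0/2*(t-s))))
        ≤ ENNReal.ofReal B1 * ENNReal.ofReal t + ENNReal.ofReal B2 * ENNReal.ofReal (2/a0) :=
          add_le_add_right (mul_le_mul_right e2 _) _
      _ = ENNReal.ofReal (B1*t) + ENNReal.ofReal (B2*(2/a0)) := by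
          rw [← ENNReal.ofReal_mul hB1, ← ENNReal.ofReal_mul hB2]
      _ = ENNReal.ofReal (B1*t + B2*(2/a0)) := by
          rw [← ENNReal.ofReal_add (mul_nonneg hB1 ht)
            (mul_nonneg hB2 (by positivity))]
  calc (∫⁻ s in Set.Ioc (0:ℝ) t, ENNReal.ofReal (B1 + B2 * Real.exp (-(a0/2*(t-s)))))
        * ENNReal.ofReal E
      ≤ ENNReal.ofReal (B1*t + B2*(2/a0)) * ENNReal.ofReal E := mul_le_mul_left step2 _
    _ = ENNReal.ofReal ((B1*t + B2*(2/a0)) * E) :=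
        (ENNReal.ofReal_mul (add_nonneg (mul_nonneg hB1 ht)
          (mul_nonneg hB2 (by positivity)))).symm

end Stmt9Aux

open Stmt9Aux

set_option maxHeartbeats 2000000 in
theorem stmt9 (d : ℕ) (hd : 1 ≤ d) (lam0 : ℝ) (h0 : 0 < lam0) (h1 : lam0 ≤ 1) :
    ∃ C : ℝ, 0 < C ∧ ∀ lam1 : ℝ, lam0 / 2 ≤ lam1 → lam1 ≤ 0.9 * lam0 →
      ∀ β : ℝ, 1/2 ≤ β → β ≤ 1 → ∀ t : ℝ, 0 ≤ t → ∀ k : Fin d → ℤ, k ≠ 0 →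
      (∑' l : {l : Fin d → ℤ // l ≠ 0},
        ∫⁻ s in Set.Ioc (0:ℝ) t, ENNReal.ofReal
          ((|t - s| * ‖latc k‖ ^ (1 - β) * jap t ^ (6 * d)) /
              (‖latc l.1‖ ^ (1 - β) * jap s ^ (6 * d)) *
            (Aw lam1 (lam0 / 200) t (latc k) (t • latc k) /
              Aw lam1 (lam0 / 200) s (latc k) (t • latc k)) *
            Real.exp (-(lam0 / 200) * (s ^ ((1:ℝ)/3) + ‖latc l.1‖ ^ ((1:ℝ)/3)))))
        ≤ ENNReal.ofReal C := by
  set δ : ℝ := lam0 / 200 with hδdef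
  have hδ0 : 0 < δ := by positivity
  have hδ200 : δ ≤ 1/200 := by rw [hδdef]; linarith
  obtain ⟨C1, hC1def⟩ : ∃ x : ℝ, x = (2^(3*d+1)*(16/δ^2)^2
      + (2/(δ^2/32)^2)*(((36*d+12) ! : ℝ)/(δ^2/32)^(36*d+12)))
      + 16/δ^4 * 2^(18*d+9) * (1 + ((18*d+9) ! : ℝ)/(δ/2)^(18*d+9)) := ⟨_, rfl⟩
  have hC10 : 0 ≤ C1 := by rw [hC1def]; positivity
  obtain ⟨S, hSdef⟩ : ∃ x : ℝ,
      x = (∑' n : ℤ, Real.exp (-(δ/d * |(n:ℝ)| ^ ((1:ℝ)/3)))) ^ d := ⟨_, rfl⟩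
  have hS0 : 0 ≤ S := by
    rw [hSdef]; exact pow_nonneg (tsum_nonneg fun n => (Real.exp_pos _).le) d
  refine ⟨C1 * S + 1, by nlinarith, ?_⟩
  intro lam1 hl1 hl2 β hβ1 hβ2 t ht k hk
  rcases ht.eq_or_lt with rfl | ht0
  · simp [Set.Ioc_self]
  -- main case `0 < t`
  have ha1 : 1 ≤ ‖latc k‖ := one_le_norm_latc hk
  set a : ℝ := ‖latc k‖ with hadef
  have ha0 : (0:ℝ) < a := by linarith
  set w : ℝ := jap t with hwdef
  have hw1 : 1 ≤ w := one_le_jap t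
  have hw0 : (0:ℝ) < w := by linarith
  have hwt : t ≤ w := self_le_jap ht
  have hw1t : w ≤ 1 + t := jap_le_one_add ht
  have hwsq : w^2 = 1 + t^2 := jap_sq t
  have hr : nrm2 (latc k) (t • latc k) = a * w := by
    rw [nrm2, norm_smul, Real.norm_eq_abs, mul_pow, sq_abs,
      show a^2 + t^2 * a^2 = a^2 * (1 + t^2) by ring,
      Real.sqrt_mul (sq_nonneg _), Real.sqrt_sq ha0.le, hwdef]
    rfl
  obtain ⟨u, hudef⟩ : ∃ x : ℝ, x = a ^ ((1:ℝ)/3) := ⟨_, rfl⟩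
  have hu1 : 1 ≤ u := by rw [hudef]; exact Real.one_le_rpow ha1 (by norm_num)
  have hu0 : (0:ℝ) < u := by linarith
  obtain ⟨R13, hR13def⟩ : ∃ x : ℝ, x = jap (a*w) ^ ((1:ℝ)/3) := ⟨_, rfl⟩
  have hR13uw : u * w ^ ((1:ℝ)/3) ≤ R13 := by
    rw [hudef, hR13def, ← Real.mul_rpow ha0.le hw0.le]
    exact Real.rpow_le_rpow (by positivity) (self_le_jap (by positivity)) (by norm_num)
  have hR130 : (0:ℝ) < R13 := by
    rw [hR13def]; exact Real.rpow_pos_of_pos (jap_pos _) _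
  have h1t0 : (0:ℝ) < 1 + t := by linarith
  obtain ⟨a0, ha0def⟩ : ∃ x : ℝ, x = δ^2 * (1+t) ^ (-(1+δ)) * R13 := ⟨_, rfl⟩
  have h1tp : 0 < (1+t) ^ (-(1+δ)) := Real.rpow_pos_of_pos h1t0 _
  have ha00 : 0 < a0 := by
    rw [ha0def]
    exact mul_pos (mul_pos (by positivity) h1tp) hR130
  -- the per-`l` integral bound
  have key : ∀ l : {l : Fin d → ℤ // l ≠ 0},
      (∫⁻ s in Set.Ioc (0:ℝ) t, ENNReal.ofReal
          ((|t - s| * a ^ (1 - β) * w ^ (6 * d)) /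
              (‖latc l.1‖ ^ (1 - β) * jap s ^ (6 * d)) *
            (Aw lam1 δ t (latc k) (t • latc k) /
              Aw lam1 δ s (latc k) (t • latc k)) *
            Real.exp (-δ * (s ^ ((1:ℝ)/3) + ‖latc l.1‖ ^ ((1:ℝ)/3)))))
        ≤ ENNReal.ofReal C1
          * ENNReal.ofReal (Real.exp (-(δ * ‖latc l.1‖ ^ ((1:ℝ)/3)))) := by
    intro l
    have hL1 : 1 ≤ ‖latc l.1‖ := one_le_norm_latc l.2
    obtain ⟨B1, hB1def⟩ : ∃ x : ℝ,
        x = t * (u^2 * w^(6*d)) * Real.exp (-(a0*(t/2))) := ⟨_, rfl⟩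
    obtain ⟨B2, hB2def⟩ : ∃ x : ℝ,
        x = (u^2 * w^(6*d)) * Real.exp (-(δ/2 * t ^ ((1:ℝ)/3))) * (1/a0) := ⟨_, rfl⟩
    have hB10 : 0 ≤ B1 := by rw [hB1def]; positivity
    have hB20 : 0 ≤ B2 := by rw [hB2def]; positivity
    have hAw : ∀ s : ℝ, Aw lam1 δ t (latc k) (t • latc k) / Aw lam1 δ s (latc k) (t • latc k)
        = Real.exp (lamW lam1 δ t (a*w) - lamW lam1 δ s (a*w)) := by
      intro s
      rw [Aw, Aw, hr, ← Real.exp_sub]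
    have hmono : ∀ s ∈ Set.Ioc (0:ℝ) t,
        ENNReal.ofReal
          ((|t - s| * a ^ (1 - β) * w ^ (6 * d)) /
              (‖latc l.1‖ ^ (1 - β) * jap s ^ (6 * d)) *
            (Aw lam1 δ t (latc k) (t • latc k) /
              Aw lam1 δ s (latc k) (t • latc k)) *
            Real.exp (-δ * (s ^ ((1:ℝ)/3) + ‖latc l.1‖ ^ ((1:ℝ)/3))))
        ≤ ENNReal.ofReal ((B1 + B2 * Real.exp (-(a0/2*(t-s))))
            * Real.exp (-(δ * ‖latc l.1‖ ^ ((1:ℝ)/3)))) := by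
      intro s hs
      apply ENNReal.ofReal_le_ofReal
      rw [hAw s]
      rw [hB1def, hB2def]
      exact pointwise_aux d hδ0 hβ1 hβ2 ha1 hL1 hw1 hs.1 hs.2 hudef ha00
        (by
          have := claim_lam_aux (a*w) lam1 hδ0 hs.1 hs.2
          rw [← hR13def, ← ha0def] at this
          linarith)
    calc (∫⁻ s in Set.Ioc (0:ℝ) t, ENNReal.ofReal
          ((|t - s| * a ^ (1 - β) * w ^ (6 * d)) /
              (‖latc l.1‖ ^ (1 - β) * jap s ^ (6 * d)) *
            (Aw lam1 δ t (latc k) (t • latc k) /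
              Aw lam1 δ s (latc k) (t • latc k)) *
            Real.exp (-δ * (s ^ ((1:ℝ)/3) + ‖latc l.1‖ ^ ((1:ℝ)/3)))))
        ≤ ∫⁻ s in Set.Ioc (0:ℝ) t, ENNReal.ofReal
            ((B1 + B2 * Real.exp (-(a0/2*(t-s))))
              * Real.exp (-(δ * ‖latc l.1‖ ^ ((1:ℝ)/3)))) :=
          setLIntegral_mono' measurableSet_Ioc hmono
      _ ≤ ENNReal.ofReal ((B1*t + B2*(2/a0))
            * Real.exp (-(δ * ‖latc l.1‖ ^ ((1:ℝ)/3)))) :=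
          integral_bound_aux hB10 hB20 ha00 ht (Real.exp_pos _).le
      _ ≤ ENNReal.ofReal (C1 * Real.exp (-(δ * ‖latc l.1‖ ^ ((1:ℝ)/3)))) := by
          apply ENNReal.ofReal_le_ofReal
          apply mul_le_mul_of_nonneg_right ?_ (Real.exp_pos _).le
          have eB : B1 * t ≤ 2^(3*d+1)*(16/δ^2)^2
              + (2/(δ^2/32)^2)*(((36*d+12) ! : ℝ)/(δ^2/32)^(36*d+12)) := by
            have := claimB_aux d (c := δ^2/32) (N := 36*d+12) hδ0 hδ200 rfl rfl ht0 hu1 hw1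
              hwt hw1t hwsq hR13uw ha0def
            rw [hB1def]
            calc t * (u^2 * w^(6*d)) * Real.exp (-(a0*(t/2))) * t
                = u^2 * w^(6*d) * t^2 * Real.exp (-(a0*(t/2))) := by ring
              _ ≤ _ := this
          have eC : B2 * (2/a0) ≤ 16/δ^4 * 2^(18*d+9)
              * (1 + ((18*d+9) ! : ℝ)/(δ/2)^(18*d+9)) := by
            have := claimC_aux d (M := 18*d+9) hδ0 hδ200 rfl ht0 hu1 hw1 hwt hw1t
              hR13uw ha0def ha00
            rw [hB2def]
            calc (u^2 * w^(6*d)) * Real.exp (-(δ/2 * t ^ ((1:ℝ)/3))) * (1/a0) * (2/a0)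
                = u^2 * w^(6*d) * Real.exp (-(δ/2 * t ^ ((1:ℝ)/3))) * (2/a0^2) := by
                  field_simp
              _ ≤ _ := this
          rw [hC1def]
          linarith
      _ = ENNReal.ofReal C1
          * ENNReal.ofReal (Real.exp (-(δ * ‖latc l.1‖ ^ ((1:ℝ)/3)))) :=
          ENNReal.ofReal_mul hC10
  -- sum over `l`
  calc (∑' l : {l : Fin d → ℤ // l ≠ 0},
        ∫⁻ s in Set.Ioc (0:ℝ) t, ENNReal.ofReal
          ((|t - s| * a ^ (1 - β) * w ^ (6 * d)) /
              (‖latc l.1‖ ^ (1 - β) * jap s ^ (6 * d)) *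
            (Aw lam1 δ t (latc k) (t • latc k) /
              Aw lam1 δ s (latc k) (t • latc k)) *
            Real.exp (-δ * (s ^ ((1:ℝ)/3) + ‖latc l.1‖ ^ ((1:ℝ)/3)))))
      ≤ ∑' l : {l : Fin d → ℤ // l ≠ 0}, ENNReal.ofReal C1
          * ENNReal.ofReal (Real.exp (-(δ * ‖latc l.1‖ ^ ((1:ℝ)/3)))) :=
        ENNReal.tsum_le_tsum key
    _ = ENNReal.ofReal C1 * ∑' l : {l : Fin d → ℤ // l ≠ 0},
          ENNReal.ofReal (Real.exp (-(δ * ‖latc l.1‖ ^ ((1:ℝ)/3)))) :=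
        ENNReal.tsum_mul_left
    _ ≤ ENNReal.ofReal C1 * ENNReal.ofReal S := by
        apply _root_.mul_le_mul_right
        rw [hSdef]
        exact tsum_latc_exp_le hd hδ0 (by linarith)
    _ = ENNReal.ofReal (C1 * S) := (ENNReal.ofReal_mul hC10).symm
    _ ≤ ENNReal.ofReal (C1 * S + 1) := ENNReal.ofReal_le_ofReal (by linarith)
end
end

section
/- Let d ≥ 1, λ₀ ∈ (0,1], δ := λ₀/200, and λ₁ ∈ [λ₀/2, 0.9λ₀]. There exists a constant C, depending only on d and λ₀, such that for any t ∈ [10,∞) and any k ∈ ℤ^d \ {0}: Σ_{a ∈ ℤ^d, |a| ≤ |k|/8} ∫_{0.99t}^{t} |t−s| · ( A(t,k,tk) / A(s,k,tk) ) · exp(−δ(|a|^{1/3} + |sa + (t−s)k|^{1/3})) ds ≤ C. -/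
set_option maxHeartbeats 1000000
open MeasureTheory Set

noncomputable section

lemma exp_ge_pow (x : ℝ) (hx : 0 ≤ x) (n : ℕ) (hn : 0 < n) : (x/n)^n ≤ Real.exp x := by
  have h1 : Real.exp x = Real.exp (x/n) ^ n := by
    rw [← Real.exp_nat_mul]
    congr 1; field_simp
  have h2 : x/n ≤ Real.exp (x/n) := by
    have := Real.add_one_le_exp (x/(n:ℝ)); linarith
  rw [h1]
  exact pow_le_pow_left₀ (by positivity) h2 n

/-- cube of cube root -/
lemma rpow_third_cube (z : ℝ) (hz : 0 ≤ z) : (z ^ ((1:ℝ)/3))^3 = z := by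
  rw [← Real.rpow_natCast (z ^ ((1:ℝ)/3)) 3, ← Real.rpow_mul hz]
  norm_num

/-- L1 : `z e^{-c z^{1/3}} ≤ 27/c³`. -/
lemma L1 (c z : ℝ) (hc : 0 < c) (hz : 0 ≤ z) :
    z * Real.exp (-(c * z ^ ((1:ℝ)/3))) ≤ 27 / c^3 := by
  have hz3 : 0 ≤ z ^ ((1:ℝ)/3) := Real.rpow_nonneg hz _
  have key : c^3 * z / 27 ≤ Real.exp (c * z ^ ((1:ℝ)/3)) := by
    have h3 := exp_ge_pow (c * z ^ ((1:ℝ)/3)) (by positivity) 3 (by norm_num)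
    calc c^3 * z / 27 = ((c * z ^ ((1:ℝ)/3))/(3:ℕ))^3 := by
          push_cast; rw [div_pow, mul_pow, rpow_third_cube z hz]; ring
      _ ≤ _ := h3
  rw [Real.exp_neg, ← div_eq_mul_inv, div_le_div_iff₀ (Real.exp_pos _) (by positivity)]
  nlinarith [Real.exp_pos (c * z ^ ((1:ℝ)/3)), pow_pos hc 3]

/-- L2 : for `z ≥ 1`, `z e^{-c z^{8/25}} ≤ 256/c⁴`. -/
lemma L2 (c z : ℝ) (hc : 0 < c) (hz : 1 ≤ z) :
    z * Real.exp (-(c * z ^ ((8:ℝ)/25))) ≤ 256 / c^4 := by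
  have hz0 : (0:ℝ) ≤ z := by linarith
  have hzp : (0:ℝ) ≤ z ^ ((8:ℝ)/25) := Real.rpow_nonneg hz0 _
  have key : c^4 * z / 256 ≤ Real.exp (c * z ^ ((8:ℝ)/25)) := by
    have h4 := exp_ge_pow (c * z ^ ((8:ℝ)/25)) (by positivity) 4 (by norm_num)
    have hzz : z ≤ (z ^ ((8:ℝ)/25))^4 := by
      rw [← Real.rpow_natCast (z ^ ((8:ℝ)/25)) 4, ← Real.rpow_mul hz0]
      calc z = z ^ (1:ℝ) := (Real.rpow_one z).symm
        _ ≤ z ^ ((8:ℝ)/25 * 4) := Real.rpow_le_rpow_of_exponent_le hz (by norm_num)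
    calc c^4 * z / 256 ≤ c^4 * (z ^ ((8:ℝ)/25))^4 / 256 := by
          apply div_le_div_of_nonneg_right ?_ (by norm_num)
          · exact mul_le_mul_of_nonneg_left hzz (by positivity)
      _ = ((c * z ^ ((8:ℝ)/25))/(4:ℕ))^4 := by push_cast; rw [div_pow, mul_pow]; ring
      _ ≤ _ := h4
  rw [Real.exp_neg, ← div_eq_mul_inv, div_le_div_iff₀ (Real.exp_pos _) (by positivity)]
  nlinarith [Real.exp_pos (c * z ^ ((8:ℝ)/25)), pow_pos hc 4]

/-- MVT-type bound : for `0 < P ≤ Q`, `δ Q^{-(1+δ)} (Q-P) ≤ P^{-δ} - Q^{-δ}`. -/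
lemma mvt_rpow (δ P Q : ℝ) (hδ : 0 < δ) (hP : 0 < P) (hPQ : P ≤ Q) :
    δ * Q ^ (-(1+δ)) * (Q - P) ≤ P ^ (-δ) - Q ^ (-δ) := by
  have hQ : 0 < Q := lt_of_lt_of_le hP hPQ
  have hQP : (1:ℝ) ≤ Q / P := (one_le_div hP).mpr hPQ
  have h1 : P ^ (-δ) = Q ^ (-δ) * (Q/P) ^ δ := by
    rw [Real.div_rpow hQ.le hP.le, Real.rpow_neg hQ.le, Real.rpow_neg hP.le]
    field_simp
  have hlog : (Q - P)/Q ≤ Real.log (Q/P) := by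
    have h2 := Real.log_le_sub_one_of_pos (div_pos hP hQ)
    have h3 : Real.log (P/Q) = - Real.log (Q/P) := by
      rw [← Real.log_inv]; congr 1; field_simp
    rw [h3] at h2
    have h4 : P / Q - 1 = -((Q-P)/Q) := by field_simp; ring
    rw [h4] at h2; linarith
  have hexp : 1 + δ * Real.log (Q/P) ≤ (Q/P) ^ δ := by
    rw [Real.rpow_def_of_pos (by positivity)]
    have := Real.add_one_le_exp (Real.log (Q/P) * δ)
    calc 1 + δ * Real.log (Q/P) = Real.log (Q/P) * δ + 1 := by ring
      _ ≤ Real.exp (Real.log (Q/P) * δ) := this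
  have hQd : (0:ℝ) < Q ^ (-δ) := Real.rpow_pos_of_pos hQ _
  have step : δ * ((Q-P)/Q) ≤ (Q/P) ^ δ - 1 := by
    have := mul_le_mul_of_nonneg_left hlog hδ.le
    linarith
  have h4 : P ^ (-δ) - Q ^ (-δ) = Q ^ (-δ) * ((Q/P) ^ δ - 1) := by
    rw [h1]; ring
  rw [h4]
  have h5 : δ * Q ^ (-(1+δ)) * (Q - P) = Q ^ (-δ) * (δ * ((Q-P)/Q)) := by
    have h6 : Q ^ (-(1+δ)) = Q ^ (-δ) * Q⁻¹ := by
      rw [← Real.rpow_neg_one Q, ← Real.rpow_add hQ]; ring_nf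
    rw [h6]; field_simp
  rw [h5]
  exact mul_le_mul_of_nonneg_left step hQd.le



lemma exp_ge_pow' (x : ℝ) (hx : 0 ≤ x) (n : ℕ) (hn : 0 < n) : (x/n)^n ≤ Real.exp x := by
  have h1 : Real.exp x = Real.exp (x/n) ^ n := by
    rw [← Real.exp_nat_mul]
    congr 1; field_simp
  have h2 : x/n ≤ Real.exp (x/n) := by
    have := Real.add_one_le_exp (x/(n:ℝ)); linarith
  rw [h1]
  exact pow_le_pow_left₀ (by positivity) h2 n


lemma latc_apply {d : ℕ} (k : Fin d → ℤ) (i : Fin d) : latc k i = (k i : ℝ) := rfl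

lemma latc_coord_le {d : ℕ} (k : Fin d → ℤ) (i : Fin d) : |(k i : ℝ)| ≤ ‖latc k‖ := by
  have h : ‖latc k‖ = Real.sqrt (∑ j, ‖latc k j‖^2) := EuclideanSpace.norm_eq _
  rw [h]
  have h2 : |(k i : ℝ)|^2 ≤ ∑ j, ‖latc k j‖^2 := by
    have h3 : ‖latc k i‖^2 ≤ ∑ j, ‖latc k j‖^2 :=
      Finset.single_le_sum (f := fun j => ‖latc k j‖^2) (fun j _ => by positivity) (Finset.mem_univ i)
    simpa [latc_apply, Real.norm_eq_abs, sq_abs] using h3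
  calc |(k i : ℝ)| = Real.sqrt (|(k i : ℝ)|^2) := by rw [Real.sqrt_sq_eq_abs, abs_abs]
    _ ≤ _ := Real.sqrt_le_sqrt h2

lemma latc_norm_ge_one {d : ℕ} (k : Fin d → ℤ) (hk : k ≠ 0) : 1 ≤ ‖latc k‖ := by
  obtain ⟨i, hi⟩ : ∃ i, k i ≠ 0 := Function.ne_iff.mp hk
  have h1 : (1:ℝ) ≤ |(k i : ℝ)| := by
    have h0 := Int.one_le_abs hi
    calc (1:ℝ) ≤ ((|k i| : ℤ) : ℝ) := by exact_mod_cast h0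
      _ = |(k i : ℝ)| := by push_cast; rfl
  exact le_trans h1 (latc_coord_le k i)

lemma one_div_sq_summable : Summable (fun n : ℕ => 1/((n:ℝ)+1)^2) := by
  have h := (summable_nat_add_iff (f := fun n : ℕ => 1/(n:ℝ)^2) 1).mpr
    (Real.summable_one_div_nat_pow.mpr one_lt_two)
  apply h.congr
  intro n; push_cast; ring

/-- `exp(-c z^{1/3}) ≤ K(c) / (z+1)^2` for `z ≥ 0`, `0 < c ≤ 1`. -/
lemma exp_le_decay (c z : ℝ) (hc : 0 < c) (hc1 : c ≤ 1) (hz : 0 ≤ z) :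
    Real.exp (-(c * z ^ ((1:ℝ)/3))) ≤ (186624/c^6) * (1/(z+1)^2) := by
  have hc6 : (0:ℝ) < c^6 := by positivity
  have hK : (4:ℝ) ≤ 186624/c^6 := by
    rw [le_div_iff₀ hc6]
    nlinarith [pow_le_one₀ hc.le hc1 (n := 6)]
  rcases le_or_gt z 1 with h|h
  · have h1 : Real.exp (-(c * z ^ ((1:ℝ)/3))) ≤ 1 := by
      rw [Real.exp_le_one_iff]
      have : 0 ≤ c * z ^ ((1:ℝ)/3) := by positivity
      linarith
    have h2 : (z+1)^2 ≤ 4 := by nlinarith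
    calc Real.exp (-(c * z ^ ((1:ℝ)/3))) ≤ 1 := h1
      _ ≤ (186624/c^6) * (1/(z+1)^2) := by
          rw [mul_one_div, le_div_iff₀ (by positivity)]
          linarith
  · -- z > 1 : use e^x ≥ (x/6)^6
    have hz16 : ((z ^ ((1:ℝ)/3)))^6 = z^2 := by
      rw [← Real.rpow_natCast (z ^ ((1:ℝ)/3)) 6, ← Real.rpow_mul hz]
      norm_num
    have key : c^6 * z^2 / 46656 ≤ Real.exp (c * z ^ ((1:ℝ)/3)) := by
      have h6 := exp_ge_pow' (c * z ^ ((1:ℝ)/3)) (by positivity) 6 (by norm_num)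
      calc c^6 * z^2 / 46656 = ((c * z ^ ((1:ℝ)/3))/(6:ℕ))^6 := by
            push_cast; rw [div_pow, mul_pow, hz16]; ring
        _ ≤ _ := h6
    have h4 : (z+1)^2 ≤ 4*z^2 := by nlinarith
    rw [Real.exp_neg, inv_le_comm₀ (Real.exp_pos _) (by positivity)]
    calc ((186624/c^6) * (1/(z+1)^2))⁻¹ = c^6 * (z+1)^2/186624 := by
          field_simp
      _ ≤ c^6 * (4*z^2)/186624 := by
          apply div_le_div_of_nonneg_right ?_ (by norm_num)
          exact mul_le_mul_of_nonneg_left h4 (by positivity)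
      _ = c^6 * z^2/46656 := by ring
      _ ≤ _ := key

/-- summability of `exp(-c |n|^{1/3})` over ℤ -/
lemma summable_exp_int (c : ℝ) (hc : 0 < c) (hc1 : c ≤ 1) :
    Summable (fun n : ℤ => Real.exp (-(c * |(n:ℝ)| ^ ((1:ℝ)/3)))) := by
  have hnat : Summable (fun n : ℕ => Real.exp (-(c * |(n:ℝ)| ^ ((1:ℝ)/3)))) := by
    have hb : Summable (fun n : ℕ => (186624/c^6) * (1/(|(n:ℝ)|+1)^2)) := by
      apply Summable.congr (one_div_sq_summable.mul_left (186624/c^6))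
      intro n
      rw [abs_of_nonneg (by positivity : (0:ℝ) ≤ (n:ℝ))]
    exact Summable.of_nonneg_of_le (fun n => (Real.exp_pos _).le)
      (fun (n : ℕ) => exp_le_decay c |(n:ℝ)| hc hc1 (abs_nonneg _)) hb
  apply Summable.of_nat_of_neg
  · simpa using hnat
  · apply hnat.congr
    intro n; norm_num

/-- summability of the product comparison function over `Fin d → ℤ`. -/
lemma summable_prod_exp (d : ℕ) (c : ℝ) (hc : 0 < c) (hc1 : c ≤ 1) :
    Summable (fun a : Fin d → ℤ => ∏ i, Real.exp (-(c * |(a i : ℝ)| ^ ((1:ℝ)/3)))) := by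
  induction d with
  | zero =>
      exact summable_of_finite_support (Set.toFinite _)
  | succ m ih =>
      have hmul := (summable_exp_int c hc hc1).mul_of_nonneg ih
        (fun n => (Real.exp_pos _).le)
        (fun a => Finset.prod_nonneg (fun i _ => (Real.exp_pos _).le))
      apply (Fin.consEquiv (fun _ : Fin (m+1) => ℤ)).summable_iff.mp
      apply hmul.congr
      intro p
      simp [Fin.consEquiv, Fin.prod_univ_succ]

/-- Main summability : `exp(-c‖latc a‖^{1/3})` summable over `ℤ^d`. -/
lemma summable_exp_latc (d : ℕ) (hd : 1 ≤ d) (c : ℝ) (hc : 0 < c) (hc1 : c ≤ 1) :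
    Summable (fun a : Fin d → ℤ => Real.exp (-(c * ‖latc a‖ ^ ((1:ℝ)/3)))) := by
  have hcd : 0 < c/d := by positivity
  have hc1' : c/d ≤ 1 := by
    rw [div_le_one (by exact_mod_cast Nat.pos_of_ne_zero (by omega))]
    calc c ≤ 1 := hc1
      _ ≤ (d:ℝ) := by exact_mod_cast hd
  apply Summable.of_nonneg_of_le (fun a => (Real.exp_pos _).le) ?_
    (summable_prod_exp d (c/d) hcd hc1')
  intro a
  have hbound : (c/d) * ∑ i, |(a i : ℝ)| ^ ((1:ℝ)/3) ≤ c * ‖latc a‖ ^ ((1:ℝ)/3) := by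
    have hsum : ∑ i, |(a i : ℝ)| ^ ((1:ℝ)/3) ≤ (d:ℝ) * ‖latc a‖ ^ ((1:ℝ)/3) := by
      have : ∀ i ∈ Finset.univ (α := Fin d), |(a i : ℝ)| ^ ((1:ℝ)/3) ≤ ‖latc a‖ ^ ((1:ℝ)/3) :=
        fun i _ => Real.rpow_le_rpow (abs_nonneg _) (latc_coord_le a i) (by norm_num)
      calc ∑ i, |(a i : ℝ)| ^ ((1:ℝ)/3) ≤ ∑ _i : Fin d, ‖latc a‖ ^ ((1:ℝ)/3) :=
            Finset.sum_le_sum this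
        _ = (d:ℝ) * ‖latc a‖ ^ ((1:ℝ)/3) := by
            rw [Finset.sum_const, Finset.card_univ, Fintype.card_fin, nsmul_eq_mul]
    have hd0 : (0:ℝ) < d := by exact_mod_cast Nat.pos_of_ne_zero (by omega)
    calc (c/d) * ∑ i, |(a i : ℝ)| ^ ((1:ℝ)/3) ≤ (c/d) * ((d:ℝ) * ‖latc a‖ ^ ((1:ℝ)/3)) :=
          mul_le_mul_of_nonneg_left hsum (by positivity)
      _ = c * ‖latc a‖ ^ ((1:ℝ)/3) := by field_simp
  calc Real.exp (-(c * ‖latc a‖ ^ ((1:ℝ)/3)))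
      ≤ Real.exp (-((c/d) * ∑ i, |(a i : ℝ)| ^ ((1:ℝ)/3))) := by
        apply Real.exp_le_exp.mpr; linarith
    _ = ∏ i, Real.exp (-((c/d) * |(a i : ℝ)| ^ ((1:ℝ)/3))) := by
        rw [← Real.exp_sum]
        congr 1
        rw [Finset.mul_sum, ← Finset.sum_neg_distrib]





/-- `(t·nk)^{-1/3}·(t/nk) = (t/nk²)^{2/3}` -/
lemma summable_exp_nat (c : ℝ) (hc : 0 < c) (hc1 : c ≤ 1) :
    Summable (fun n : ℕ => Real.exp (-(c * (n:ℝ) ^ ((1:ℝ)/3)))) := by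
  have hb : Summable (fun n : ℕ => (186624/c^6) * (1/((n:ℝ)+1)^2)) :=
    one_div_sq_summable.mul_left (186624/c^6)
  apply Summable.of_nonneg_of_le (fun n => (Real.exp_pos _).le) ?_ hb
  intro n
  have := exp_le_decay c (n:ℝ) hc hc1 (Nat.cast_nonneg n)
  exact this


lemma rpow_id1 (t nk : ℝ) (ht : 0 < t) (hnk : 0 < nk) :
    (t*nk) ^ (-(1:ℝ)/3) * (t/nk) = (t/nk^2) ^ ((2:ℝ)/3) := by
  rw [Real.rpow_def_of_pos (mul_pos ht hnk), Real.rpow_def_of_pos (by positivity),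
    Real.log_mul (ne_of_gt ht) (ne_of_gt hnk), Real.log_div (ne_of_gt ht) (by positivity),
    Real.log_pow]
  nth_rewrite 1 [show t/nk = Real.exp (Real.log t - Real.log nk) by
    rw [Real.exp_sub, Real.exp_log ht, Real.exp_log hnk]]
  rw [← Real.exp_add]
  congr 1
  push_cast
  ring

/-- `t·(t·nk)^{-2/3} = (t/nk²)^{1/3}` -/
lemma rpow_id2 (t nk : ℝ) (ht : 0 < t) (hnk : 0 < nk) :
    t * (t*nk) ^ (-(2:ℝ)/3) = (t/nk^2) ^ ((1:ℝ)/3) := by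
  rw [Real.rpow_def_of_pos (mul_pos ht hnk), Real.rpow_def_of_pos (by positivity),
    Real.log_mul (ne_of_gt ht) (ne_of_gt hnk), Real.log_div (ne_of_gt ht) (by positivity),
    Real.log_pow]
  nth_rewrite 1 [show t = Real.exp (Real.log t) by rw [Real.exp_log ht]]
  rw [← Real.exp_add]
  congr 1
  push_cast
  ring

lemma two_mul_rpow_lb (z δ : ℝ) (hz : 1 ≤ z) (hδ0 : 0 < δ) (hδ1 : δ ≤ 1/200) :
    (1/4) * z ^ (-((1+δ)/3)) ≤ (2 * z ^ ((1:ℝ)/3)) ^ (-(1+δ)) := by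
  have hz0 : (0:ℝ) < z := by linarith
  rw [Real.mul_rpow (by norm_num) (by positivity),
    ← Real.rpow_mul hz0.le]
  have h2 : (1/4 : ℝ) ≤ (2:ℝ) ^ (-(1+δ)) := by
    have hle : (2:ℝ) ^ ((-2 : ℤ) : ℝ) ≤ (2:ℝ) ^ (-(1+δ)) :=
      Real.rpow_le_rpow_of_exponent_le one_le_two (by push_cast; linarith)
    rw [Real.rpow_intCast] at hle
    norm_num at hle
    rw [show -(1+δ) = -δ + -1 by ring]
    linarith
  have h3 : z ^ ((1:ℝ)/3 * -(1+δ)) = z ^ (-((1+δ)/3)) := by ring_nf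
  rw [h3]
  have hzp : (0:ℝ) < z ^ (-((1+δ)/3)) := Real.rpow_pos_of_pos hz0 _
  exact mul_le_mul_of_nonneg_right h2 hzp.le




/-! mini scalar lemmas with minimal context -/

lemma Mnum (δ nk A : ℝ) (hδ0 : 0 < δ) (hδ1 : δ ≤ 1/200) (hnk : 1 ≤ nk)
    (hA0 : 0 ≤ A) (hA : A ≤ 10^10) : A/δ^3 ≤ (10^10/δ^11) * nk := by
  have h1 : A/δ^3 ≤ 10^10/δ^3 := by gcongr
  have h2 : (10:ℝ)^10/δ^3 ≤ 10^10/δ^11 := by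
    apply div_le_div_of_nonneg_left (by norm_num) (by positivity)
    calc δ^11 = δ^3 * δ^8 := by ring
      _ ≤ δ^3 * 1 := by
          apply mul_le_mul_of_nonneg_left (pow_le_one₀ hδ0.le (by linarith)) (by positivity)
      _ = δ^3 := by ring
  have hMpos : (0:ℝ) < 10^10/δ^11 := by positivity
  nlinarith

lemma caseA_comb (δ u nX e1 e2 Eb M nk : ℝ) (hδ0 : 0 < δ)
    (hu0 : 0 ≤ u) (hA : u ≤ 3*nX)
    (he1p : 0 < e1) (he11 : e1 ≤ 1) (he2p : 0 < e2) (he21 : e2 ≤ 1)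
    (hEb0 : 0 < Eb) (hEb1 : Eb ≤ 1)
    (hL1X : nX * e2 ≤ 216/δ^3) (hc4 : 648/δ^3 ≤ M*nk) :
    u * Eb * (e1*e2) ≤ M * nk := by
  have h' : Eb * (e1*e2) ≤ e2 := by
    have h0 := mul_le_mul hEb1 (mul_le_mul he11 le_rfl he2p.le zero_le_one)
      (by positivity) zero_le_one
    linarith
  have c1 : u * Eb * (e1*e2) ≤ u * e2 := by
    calc u * Eb * (e1*e2) = u * (Eb * (e1*e2)) := by ring
      _ ≤ u * e2 := mul_le_mul_of_nonneg_left h' hu0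
  have c2 : u * e2 ≤ 3*(nX*e2) := by
    nlinarith [mul_nonneg (by linarith : (0:ℝ) ≤ 3*nX - u) he2p.le]
  rw [show (648:ℝ)/δ^3 = 3*(216/δ^3) by ring] at hc4
  linarith

lemma caseB1_comb (δ u na nk e1 e2 Eb M : ℝ) (hδ0 : 0 < δ)
    (hu0 : 0 ≤ u) (hu15 : 2*u ≤ 3*(nk*na)) (hnk0 : 0 < nk)
    (he1p : 0 < e1) (he11 : e1 ≤ 1) (he2p : 0 < e2) (he21 : e2 ≤ 1)
    (hEb0 : 0 < Eb) (hEb1 : Eb ≤ 1)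
    (hL1a : na * e1 ≤ 216/δ^3) (hc4 : 324/δ^3 ≤ M) (hM0 : 0 < M) :
    u * Eb * (e1*e2) ≤ M * nk := by
  have h' : Eb * (e1*e2) ≤ e1 := by
    have h0 := mul_le_mul hEb1 (mul_le_mul le_rfl he21 he2p.le he1p.le)
      (by positivity) zero_le_one
    nlinarith
  have c1 : u * Eb * (e1*e2) ≤ u * e1 := by
    calc u * Eb * (e1*e2) = u * (Eb * (e1*e2)) := by ring
      _ ≤ u * e1 := mul_le_mul_of_nonneg_left h' hu0
  have c2 : u * e1 ≤ (3/2)*(nk*(na*e1)) := by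
    nlinarith [mul_nonneg (by linarith : (0:ℝ) ≤ (3/2)*(nk*na) - u) he1p.le]
  have c3 : (3/2)*(nk*(na*e1)) ≤ (3/2)*(nk*(216/δ^3)) := by
    apply mul_le_mul_of_nonneg_left ?_ (by norm_num)
    exact mul_le_mul_of_nonneg_left hL1a hnk0.le
  have c4 : (3/2)*(nk*(216/δ^3)) ≤ M*nk := by
    rw [show (3/2)*(nk*(216/δ^3)) = (324/δ^3)*nk by ring]
    exact mul_le_mul_of_nonneg_right hc4 hnk0.le
  linarith

lemma caseB2_comb (δ u na nk z e1 e2 Eb : ℝ) (hδ0 : 0 < δ) (hδ1 : δ ≤ 1/200)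
    (hu0 : 0 ≤ u) (hz1 : 1 ≤ z) (hna1 : 1 ≤ na) (hnk0 : 0 < nk)
    (hu_le2 : 2*u ≤ 3*(na*z*nk))
    (he1p : 0 < e1) (he11 : e1 ≤ 1) (he2p : 0 < e2) (he21 : e2 ≤ 1)
    (hEb0 : 0 < Eb)
    (hzEb : z * Eb ≤ 256/((9/100)*δ^2)^4)
    (hL1a : na * e1 ≤ 216/δ^3) :
    u * Eb * (e1*e2) ≤ (10^10/δ^11) * nk := by
  have hu_le : u ≤ (3/2)*(na*z*nk) := by linarith
  have hz0 : (0:ℝ) < z := by linarith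
  have c1 : u * Eb * (e1*e2) ≤ u * Eb * e1 := by
    have h2 : e1*e2 ≤ e1 := by
      have := mul_le_mul_of_nonneg_left he21 he1p.le
      simpa using this
    exact mul_le_mul_of_nonneg_left h2 (by positivity)
  have c2 : u * Eb * e1 ≤ ((3/2)*(na*z*nk)) * Eb * e1 := by
    apply mul_le_mul_of_nonneg_right ?_ he1p.le
    exact mul_le_mul_of_nonneg_right hu_le hEb0.le
  have c3 : ((3/2)*(na*z*nk)) * Eb * e1 = (3/2) * nk * ((na*e1) * (z*Eb)) := by ring
  have c4 : (na*e1) * (z*Eb) ≤ (216/δ^3) * (256/((9/100)*δ^2)^4) := by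
    apply mul_le_mul hL1a hzEb (by positivity)
    positivity
  have c5 : (3/2) * nk * ((na*e1) * (z*Eb)) ≤ (3/2) * nk * ((216/δ^3) * (256/((9/100)*δ^2)^4)) := by
    apply mul_le_mul_of_nonneg_left c4 (by positivity)
  have heq : (3/2) * ((216/δ^3) * (256/((9/100)*δ^2)^4)) = (82944 * 10^8/6561)/δ^11 := by
    field_simp
    ring
  have heq2 : (3/2) * nk * ((216/δ^3) * (256/((9/100)*δ^2)^4))
      = ((3/2) * ((216/δ^3) * (256/((9/100)*δ^2)^4))) * nk := by ring
  have c6 : (3/2) * nk * ((216/δ^3) * (256/((9/100)*δ^2)^4)) ≤ (10^10/δ^11) * nk := by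
    rw [heq2, heq]
    apply mul_le_mul_of_nonneg_right ?_ hnk0.le
    gcongr
    norm_num
  linarith

lemma derive_na1 (t s na nk nX u : ℝ) (hupos : 0 < u) (hnk : 1 ≤ nk) (hs0 : 0 < s)
    (hna : na = 0 ∨ 1 ≤ na) (hB : 3*nX < u) (hX2 : u*nk - s*na ≤ nX) : 1 ≤ na := by
  rcases hna with h|h
  · exfalso
    rw [h] at hX2
    nlinarith
  · exact h

lemma derive_ubounds (t s na nk nX u : ℝ) (ht : 10 ≤ t) (hs1 : 0.99*t < s) (hs2 : s ≤ t)
    (hu : u = t - s) (hnk : 1 ≤ nk) (hna1 : 1 ≤ na) (hnX0 : 0 ≤ nX) (hB : 3*nX < u)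
    (hX1 : s*na - u*nk ≤ nX) (hX2 : u*nk - s*na ≤ nX) :
    (74/100)*(t*na) ≤ u*nk ∧ 2*(u*nk) ≤ 3*(t*na) := by
  have hu0 : 0 ≤ u := by nlinarith
  constructor
  · nlinarith [mul_nonneg hu0 (by linarith : (0:ℝ) ≤ nk - 1),
      mul_nonneg (by linarith : (0:ℝ) ≤ s - 0.99*t) (by linarith : (0:ℝ) ≤ na),
      mul_nonneg (by linarith : (0:ℝ) ≤ t) (by linarith : (0:ℝ) ≤ na)]
  · nlinarith [mul_nonneg hu0 (by linarith : (0:ℝ) ≤ nk - 1),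
      mul_nonneg hu0 (by linarith : (0:ℝ) ≤ na)]

/-- The key pointwise bound. -/
lemma key_pointwise (lam1 δ t s r na nk nX : ℝ)
    (hδ0 : 0 < δ) (hδ1 : δ ≤ 1/200)
    (ht : 10 ≤ t) (hs1 : 0.99*t < s) (hs2 : s ≤ t)
    (hnk : 1 ≤ nk) (hna0 : 0 ≤ na) (hna : na = 0 ∨ 1 ≤ na)
    (hnX : 0 ≤ nX)
    (hJl : t*nk ≤ jap r) (hJu : jap r ≤ 1.01*(t*nk))
    (hX1 : s*na - (t-s)*nk ≤ nX) (hX2 : (t-s)*nk - s*na ≤ nX) :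
    (t-s) * Real.exp (lamW lam1 δ t r - lamW lam1 δ s r)
      * Real.exp (-(δ * (na ^ ((1:ℝ)/3) + nX ^ ((1:ℝ)/3))))
    ≤ (10^10/δ^11) * nk *
      (Real.exp (-(δ/2 * na ^ ((1:ℝ)/3))) * Real.exp (-(δ/2 * nX ^ ((1:ℝ)/3)))) := by
  have ht0 : (0:ℝ) < t := by linarith only [ht]
  have hs0 : (0:ℝ) < s := by linarith only [hs1, ht]
  have hnk0 : (0:ℝ) < nk := by linarith only [hnk]
  set u := t - s with hu_def
  have hu0 : 0 ≤ u := by simp only [hu_def]; linarith only [hs2]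
  have hJpos : 0 < jap r := by
    have h10 : (10:ℝ)*1 ≤ t*nk := mul_le_mul ht hnk (by norm_num) (by linarith only [ht])
    linarith only [hJl, h10]
  set J3 : ℝ := jap r ^ ((1:ℝ)/3) with hJ3
  set q : ℝ := jap r ^ (-(2:ℝ)/3) with hq
  have hJ30 : 0 < J3 := Real.rpow_pos_of_pos hJpos _
  have hq0 : 0 < q := Real.rpow_pos_of_pos hJpos _
  set Q : ℝ := 1 + t * q with hQ
  set P : ℝ := 1 + s * q with hP
  have hP0 : 0 < P := by positivity
  have hPQ : P ≤ Q := by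
    simp only [hP, hQ]
    have := mul_le_mul_of_nonneg_right hs2 hq0.le
    linarith only [this]
  have hQ0 : 0 < Q := lt_of_lt_of_le hP0 hPQ
  set β : ℝ := δ^2 * (jap r) ^ (-(1:ℝ)/3) * Q ^ (-(1+δ)) with hβ
  have hβ0 : 0 ≤ β := by positivity
  -- the weight-ratio bound
  have hlam : lamW lam1 δ t r - lamW lam1 δ s r ≤ -(β * u) := by
    have hsplit : lamW lam1 δ t r - lamW lam1 δ s r
        = δ * J3 * ((1+t) ^ (-δ) - (1+s) ^ (-δ)) + δ * J3 * (Q ^ (-δ) - P ^ (-δ)) := by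
      simp only [lamW, hJ3, hq, hQ, hP]
      ring
    have hT1 : (1+t) ^ (-δ) - (1+s) ^ (-δ) ≤ 0 := by
      have hmv := mvt_rpow δ (1+s) (1+t) hδ0 (by linarith) (by linarith)
      have h00 : 0 ≤ δ * (1+t) ^ (-(1+δ)) * (1+t-(1+s)) :=
        mul_nonneg (mul_nonneg hδ0.le
          (Real.rpow_nonneg (by linarith : (0:ℝ) ≤ 1+t) _)) (by linarith)
      linarith
    have hT2 : Q ^ (-δ) - P ^ (-δ) ≤ -(δ * Q ^ (-(1+δ)) * (u * q)) := by
      have hmv := mvt_rpow δ P Q hδ0 hP0 hPQ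
      have hQP : Q - P = u * q := by simp only [hP, hQ, hu_def]; ring
      rw [hQP] at hmv
      linarith
    have hJq : J3 * q = (jap r) ^ (-(1:ℝ)/3) := by
      rw [hJ3, hq, ← Real.rpow_add hJpos]
      norm_num
    calc lamW lam1 δ t r - lamW lam1 δ s r
        = δ * J3 * ((1+t) ^ (-δ) - (1+s) ^ (-δ)) + δ * J3 * (Q ^ (-δ) - P ^ (-δ)) := hsplit
      _ ≤ 0 + δ * J3 * (-(δ * Q ^ (-(1+δ)) * (u * q))) := by
          have g1 : δ * J3 * ((1+t) ^ (-δ) - (1+s) ^ (-δ)) ≤ 0 := by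
            apply mul_nonpos_of_nonneg_of_nonpos (by positivity) hT1
          have g2 : δ * J3 * (Q ^ (-δ) - P ^ (-δ)) ≤ δ * J3 * (-(δ * Q ^ (-(1+δ)) * (u * q))) :=
            mul_le_mul_of_nonneg_left hT2 (by positivity)
          linarith
      _ = -(β * u) := by
          rw [hβ, ← hJq]; ring
  have hE : Real.exp (lamW lam1 δ t r - lamW lam1 δ s r) ≤ Real.exp (-(β*u)) :=
    Real.exp_le_exp.mpr hlam
  set x : ℝ := na ^ ((1:ℝ)/3) with hx
  set y : ℝ := nX ^ ((1:ℝ)/3) with hy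
  have hx0 : 0 ≤ x := Real.rpow_nonneg hna0 _
  have hy0 : 0 ≤ y := Real.rpow_nonneg hnX _
  set e1 : ℝ := Real.exp (-(δ/2 * x)) with he1
  set e2 : ℝ := Real.exp (-(δ/2 * y)) with he2
  have he1p : 0 < e1 := Real.exp_pos _
  have he2p : 0 < e2 := Real.exp_pos _
  have he11 : e1 ≤ 1 := by
    rw [he1, Real.exp_le_one_iff]
    have : 0 ≤ δ/2*x := by positivity
    linarith only [this]
  have he21 : e2 ≤ 1 := by
    rw [he2, Real.exp_le_one_iff]
    have : 0 ≤ δ/2*y := by positivity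
    linarith only [this]
  have hexpβu : Real.exp (-(β*u)) ≤ 1 := by
    rw [Real.exp_le_one_iff]
    have : 0 ≤ β*u := mul_nonneg hβ0 hu0
    linarith only [this]
  set M : ℝ := 10^10/δ^11 with hM
  have heq216 : 27/((δ/2)^3) = 216/δ^3 := by
    field_simp; ring
  have hL1a : na * e1 ≤ 216/δ^3 := by
    rw [he1, hx, ← heq216]
    exact L1 (δ/2) na (by positivity) hna0
  -- main scalar bound
  have hmain : u * Real.exp (-(β*u)) * (e1 * e2) ≤ M * nk := by
    rcases le_or_gt u (3*nX) with hA | hB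
    · have hL1X : nX * e2 ≤ 216/δ^3 := by
        rw [he2, hy, ← heq216]
        exact L1 (δ/2) nX (by positivity) hnX
      exact caseA_comb δ u nX e1 e2 (Real.exp (-(β*u))) M nk hδ0 hu0 hA
        he1p he11 he2p he21 (Real.exp_pos _) hexpβu hL1X
        (Mnum δ nk 648 hδ0 hδ1 hnk (by norm_num) (by norm_num))
    · have hupos : 0 < u := by linarith only [hB, hnX]
      have hna1 : 1 ≤ na := derive_na1 t s na nk nX u hupos hnk hs0 hna hB hX2
      obtain ⟨hkey1, hkey2⟩ := derive_ubounds t s na nk nX u ht hs1 hs2 hu_def hnk hna1 hnX hB hX1 hX2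
      rcases le_or_gt t (nk^2) with hty | hty
      · -- subcase B1
        have hu15 : 2*u ≤ 3*(nk*na) := by
          have h1 : (2*u)*nk ≤ (3*(nk*na))*nk := by
            have h2 := mul_le_mul_of_nonneg_right hty hna0
            linarith only [hkey2, h2]
          exact le_of_mul_le_mul_right h1 hnk0
        exact caseB1_comb δ u na nk e1 e2 (Real.exp (-(β*u))) M hδ0 hu0 hu15 hnk0
          he1p he11 he2p he21 (Real.exp_pos _) hexpβu hL1a
          (by rw [hM]
              have h2 : (324:ℝ)/δ^3 ≤ 10^10/δ^3 := by gcongr <;> norm_num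
              have h3 : (10:ℝ)^10/δ^3 ≤ 10^10/δ^11 := by
                apply div_le_div_of_nonneg_left (by norm_num) (by positivity)
                calc δ^11 = δ^3 * δ^8 := by ring
                  _ ≤ δ^3 * 1 := by
                      apply mul_le_mul_of_nonneg_left (pow_le_one₀ hδ0.le (by linarith)) (by positivity)
                  _ = δ^3 := by ring
              linarith)
          (by rw [hM]; positivity)
      · -- subcase B2
        set z : ℝ := t/nk^2 with hz_def
        have hz1 : (1:ℝ) ≤ z := by
          rw [hz_def, le_div_iff₀ (by positivity)]
          linarith only [hty]
        have hz0 : (0:ℝ) < z := by linarith only [hz1]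
        -- u upper bound in z form
        have htz : t = z*nk^2 := by rw [hz_def]; field_simp
        have hu_le2 : 2*u ≤ 3*(na*z*nk) := by
          have hkey2' : 2*(u*nk) ≤ 3*((z*nk^2)*na) := by rw [← htz]; exact hkey2
          have h1 : (2*u)*nk ≤ ((3:ℝ)*(na*z*nk))*nk := by linarith only [hkey2']
          exact le_of_mul_le_mul_right h1 hnk0
        -- the exponbound : (9/100) δ² z^{8/25} ≤ β u
        have hq_le : q ≤ (t*nk) ^ (-(2:ℝ)/3) := by
          rw [hq]
          exact Real.rpow_le_rpow_of_nonpos (by positivity) hJl (by norm_num)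
        have htq : t*q ≤ z ^ ((1:ℝ)/3) := by
          calc t*q ≤ t*((t*nk) ^ (-(2:ℝ)/3)) := mul_le_mul_of_nonneg_left hq_le ht0.le
            _ = z ^ ((1:ℝ)/3) := by rw [hz_def]; exact rpow_id2 t nk ht0 hnk0
        have hz13 : (1:ℝ) ≤ z ^ ((1:ℝ)/3) := by
          calc (1:ℝ) = z ^ (0:ℝ) := (Real.rpow_zero z).symm
            _ ≤ z ^ ((1:ℝ)/3) := Real.rpow_le_rpow_of_exponent_le hz1 (by norm_num)
        have hQz : Q ≤ 2 * z ^ ((1:ℝ)/3) := by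
          rw [hQ]; linarith
        have hQlb : (1/4) * z ^ (-((1+δ)/3)) ≤ Q ^ (-(1+δ)) := by
          refine le_trans (two_mul_rpow_lb z δ hz1 hδ0 hδ1) ?_
          exact Real.rpow_le_rpow_of_nonpos hQ0 hQz (by linarith)
        have hJlb : (1/2) * (t*nk) ^ (-(1:ℝ)/3) ≤ (jap r) ^ (-(1:ℝ)/3) := by
          have h1 : (1.01*(t*nk)) ^ (-(1:ℝ)/3) ≤ (jap r) ^ (-(1:ℝ)/3) :=
            Real.rpow_le_rpow_of_nonpos hJpos hJu (by norm_num)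
          have h2 : (1.01*(t*nk)) ^ (-(1:ℝ)/3)
              = (1.01:ℝ) ^ (-(1:ℝ)/3) * (t*nk) ^ (-(1:ℝ)/3) :=
            Real.mul_rpow (by norm_num) (by positivity)
          have h3 : (1/2 : ℝ) ≤ (1.01:ℝ) ^ (-(1:ℝ)/3) := by
            have h4 : (1.01:ℝ) ^ ((-1:ℤ):ℝ) ≤ (1.01:ℝ) ^ (-(1:ℝ)/3) :=
              Real.rpow_le_rpow_of_exponent_le (by norm_num) (by push_cast; norm_num)
            rw [Real.rpow_intCast] at h4
            norm_num at h4
            linarith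
          have h5 : (0:ℝ) ≤ (t*nk) ^ (-(1:ℝ)/3) := Real.rpow_nonneg (by positivity) _
          have h6 := mul_le_mul_of_nonneg_right h3 h5
          rw [← h2] at h6
          linarith only [h1, h6]
        have hw : (9/100)*δ^2 * z ^ ((8:ℝ)/25) ≤ β * u := by
          have hlb1 : δ^2 * ((1/2) * (t*nk) ^ (-(1:ℝ)/3)) * ((1/4) * z ^ (-((1+δ)/3))) ≤ β := by
            rw [hβ]
            have hmm := mul_le_mul hJlb hQlb
              (mul_nonneg (by norm_num) (Real.rpow_nonneg hz0.le _))
              (Real.rpow_nonneg hJpos.le _)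
            calc δ^2 * ((1/2) * (t*nk) ^ (-(1:ℝ)/3)) * ((1/4) * z ^ (-((1+δ)/3)))
                = δ^2 * (((1/2) * (t*nk) ^ (-(1:ℝ)/3)) * ((1/4) * z ^ (-((1+δ)/3)))) := by ring
              _ ≤ δ^2 * ((jap r) ^ (-(1:ℝ)/3) * Q ^ (-(1+δ))) :=
                  mul_le_mul_of_nonneg_left hmm (by positivity)
              _ = δ^2 * (jap r) ^ (-(1:ℝ)/3) * Q ^ (-(1+δ)) := by ring
          have hlb2 : δ^2 * ((1/2) * (t*nk) ^ (-(1:ℝ)/3)) * ((1/4) * z ^ (-((1+δ)/3))) * ((74/100)*(t*na/nk)) ≤ β * u := by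
            have hulb : (74/100)*(t*na/nk) ≤ u := by
              rw [mul_comm, div_mul_eq_mul_div, div_le_iff₀ hnk0]
              calc t*na*(74/100) = (74/100)*(t*na) := by ring
                _ ≤ u*nk := hkey1
            have hpos : 0 ≤ δ^2 * ((1/2) * (t*nk) ^ (-(1:ℝ)/3)) * ((1/4) * z ^ (-((1+δ)/3))) := by
              have := Real.rpow_nonneg (mul_pos ht0 hnk0).le (-(1:ℝ)/3)
              have := Real.rpow_nonneg hz0.le (-((1+δ)/3))
              positivity
            calc δ^2 * ((1/2) * (t*nk) ^ (-(1:ℝ)/3)) * ((1/4) * z ^ (-((1+δ)/3))) * ((74/100)*(t*na/nk))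
                ≤ δ^2 * ((1/2) * (t*nk) ^ (-(1:ℝ)/3)) * ((1/4) * z ^ (-((1+δ)/3))) * u :=
                  mul_le_mul_of_nonneg_left hulb hpos
              _ ≤ β * u := mul_le_mul_of_nonneg_right hlb1 hu0
          -- compute the value of the lower bound
          have hval : δ^2 * ((1/2) * (t*nk) ^ (-(1:ℝ)/3)) * ((1/4) * z ^ (-((1+δ)/3))) * ((74/100)*(t*na/nk))
              = (74/800) * δ^2 * na * (z ^ ((2:ℝ)/3) * z ^ (-((1+δ)/3))) := by
            have hid : (t*nk) ^ (-(1:ℝ)/3) * (t/nk) = z ^ ((2:ℝ)/3) := by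
              rw [hz_def]; exact rpow_id1 t nk ht0 hnk0
            calc δ^2 * ((1/2) * (t*nk) ^ (-(1:ℝ)/3)) * ((1/4) * z ^ (-((1+δ)/3))) * ((74/100)*(t*na/nk))
                = (74/800) * δ^2 * na * (((t*nk) ^ (-(1:ℝ)/3) * (t/nk)) * z ^ (-((1+δ)/3))) := by
                  ring
              _ = (74/800) * δ^2 * na * (z ^ ((2:ℝ)/3) * z ^ (-((1+δ)/3))) := by rw [hid]
          have hzz : z ^ ((2:ℝ)/3) * z ^ (-((1+δ)/3)) = z ^ ((1-δ)/3) := by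
            rw [← Real.rpow_add hz0]
            congr 1
            ring
          have hzz2 : z ^ ((8:ℝ)/25) ≤ z ^ ((1-δ)/3) :=
            Real.rpow_le_rpow_of_exponent_le hz1 (by linarith)
          have hfin : (9/100)*δ^2 * z ^ ((8:ℝ)/25)
              ≤ (74/800) * δ^2 * na * (z ^ ((2:ℝ)/3) * z ^ (-((1+δ)/3))) := by
            rw [hzz]
            have hz80 : 0 ≤ z ^ ((8:ℝ)/25) := Real.rpow_nonneg hz0.le _
            have st1 : (9/100)*δ^2 * z ^ ((8:ℝ)/25) ≤ (74/800)*δ^2 * z ^ ((8:ℝ)/25) := by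
              apply mul_le_mul_of_nonneg_right ?_ hz80
              have h9 : (9/100:ℝ) ≤ 74/800 := by norm_num
              exact mul_le_mul_of_nonneg_right h9 (sq_nonneg δ)
            have st2 : (74/800)*δ^2 * z ^ ((8:ℝ)/25) ≤ (74/800)*δ^2 * z ^ ((1-δ)/3) :=
              mul_le_mul_of_nonneg_left hzz2 (by positivity)
            have st3 : (74/800)*δ^2 * z ^ ((1-δ)/3) ≤ (74/800) * δ^2 * na * z ^ ((1-δ)/3) := by
              apply mul_le_mul_of_nonneg_right ?_ (Real.rpow_nonneg hz0.le _)
              calc (74/800)*δ^2 = (74/800)*δ^2*1 := by ring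
                _ ≤ (74/800) * δ^2 * na :=
                    mul_le_mul_of_nonneg_left hna1 (by positivity)
            linarith only [st1, st2, st3]
          rw [hval] at hlb2
          linarith only [hlb2, hfin]
        have hzEb : z * Real.exp (-(β*u)) ≤ 256/((9/100)*δ^2)^4 := by
          have h1 : Real.exp (-(β*u)) ≤ Real.exp (-((9/100)*δ^2 * z ^ ((8:ℝ)/25))) :=
            Real.exp_le_exp.mpr (by linarith)
          calc z * Real.exp (-(β*u)) ≤ z * Real.exp (-((9/100)*δ^2 * z ^ ((8:ℝ)/25))) :=
                mul_le_mul_of_nonneg_left h1 hz0.le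
            _ ≤ 256/((9/100)*δ^2)^4 := L2 ((9/100)*δ^2) z (by positivity) hz1
        rw [hM]
        exact caseB2_comb δ u na nk z e1 e2 (Real.exp (-(β*u))) hδ0 hδ1 hu0 hz1 hna1 hnk0
          hu_le2 he1p he11 he2p he21 (Real.exp_pos _) hzEb hL1a
  -- assembly
  have hxsplit : Real.exp (-(δ * (x + y))) = (e1*e2)*(e1*e2) := by
    rw [show -(δ*(x+y)) = (-(δ/2*x) + -(δ/2*y)) + (-(δ/2*x) + -(δ/2*y)) by ring,
      Real.exp_add, Real.exp_add, ← he1, ← he2]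
  calc u * Real.exp (lamW lam1 δ t r - lamW lam1 δ s r) * Real.exp (-(δ * (x + y)))
      = (u * Real.exp (lamW lam1 δ t r - lamW lam1 δ s r) * (e1*e2)) * (e1*e2) := by
        rw [hxsplit]; ring
    _ ≤ (u * Real.exp (-(β*u)) * (e1*e2)) * (e1*e2) := by
        apply mul_le_mul_of_nonneg_right ?_ (by positivity)
        apply mul_le_mul_of_nonneg_right ?_ (by positivity)
        exact mul_le_mul_of_nonneg_left hE hu0
    _ ≤ (M * nk) * (e1*e2) := mul_le_mul_of_nonneg_right hmain (by positivity)
    _ = M * nk * (e1 * e2) := by ring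



lemma shell_integral (c v0 s0 A B : ℝ) (g : ℝ → ℝ) (hc : 0 < c) (hv0 : 0 < v0)
    (hg : ∀ s', v0*|s'-s0| ≤ g s') :
    ∫⁻ s' in Set.Ioc A B, ENNReal.ofReal (Real.exp (-(c * (g s')^((1:ℝ)/3))))
      ≤ (∑' n : ℕ, ENNReal.ofReal (Real.exp (-(c * (n:ℝ)^((1:ℝ)/3))))) * ENNReal.ofReal (2/v0) := by
  set E : ℕ → Set ℝ := fun n => {s' | v0*|s'-s0| < n+1 ∧ (n:ℝ) ≤ v0*|s'-s0|} with hE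
  have hcover : Set.Ioc A B ⊆ ⋃ n, E n := by
    intro s' _
    have h0 : 0 ≤ v0*|s'-s0| := by positivity
    refine Set.mem_iUnion.mpr ⟨⌊v0*|s'-s0|⌋₊, ?_, ?_⟩
    · push_cast
      exact Nat.lt_floor_add_one _
    · exact Nat.floor_le h0
  have hmeas : ∀ n, MeasurableSet (E n) := by
    intro n
    have hcont : Measurable (fun s' : ℝ => v0*|s'-s0|) :=
      measurable_const.mul ((measurable_id.sub measurable_const).abs)
    exact (measurableSet_lt hcont measurable_const).inter
      (measurableSet_le measurable_const hcont)
  calc ∫⁻ s' in Set.Ioc A B, ENNReal.ofReal (Real.exp (-(c * (g s')^((1:ℝ)/3))))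
      ≤ ∫⁻ s' in ⋃ n, E n, ENNReal.ofReal (Real.exp (-(c * (g s')^((1:ℝ)/3)))) :=
        lintegral_mono_set hcover
    _ ≤ ∑' n : ℕ, ∫⁻ s' in E n, ENNReal.ofReal (Real.exp (-(c * (g s')^((1:ℝ)/3)))) :=
        lintegral_iUnion_le _ _
    _ ≤ ∑' n : ℕ, ENNReal.ofReal (Real.exp (-(c * (n:ℝ)^((1:ℝ)/3)))) * ENNReal.ofReal (2/v0) := by
        apply ENNReal.tsum_le_tsum
        intro n
        have hbd : ∫⁻ s' in E n, ENNReal.ofReal (Real.exp (-(c * (g s')^((1:ℝ)/3))))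
            ≤ ∫⁻ _s' in E n, ENNReal.ofReal (Real.exp (-(c * (n:ℝ)^((1:ℝ)/3)))) := by
          apply setLIntegral_mono_ae measurable_const.aemeasurable
          apply ae_of_all
          intro s' hs'
          apply ENNReal.ofReal_le_ofReal
          apply Real.exp_le_exp.mpr
          have h1 : (n:ℝ) ≤ g s' := le_trans hs'.2 (hg s')
          have h2 : (n:ℝ)^((1:ℝ)/3) ≤ (g s')^((1:ℝ)/3) :=
            Real.rpow_le_rpow (Nat.cast_nonneg n) h1 (by norm_num)
          have h3 := mul_le_mul_of_nonneg_left h2 hc.le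
          linarith only [h3]
        rw [setLIntegral_const] at hbd
        refine le_trans hbd ?_
        apply mul_le_mul_right
        -- measure bound
        have hsub : E n ⊆ Icc (s0 + n/v0) (s0 + (n+1)/v0) ∪ Icc (s0 - (n+1)/v0) (s0 - n/v0) := by
          intro s' hs'
          obtain ⟨hlt, hge⟩ := hs'
          have habs1 : |s'-s0| ≤ (n+1)/v0 := by
            rw [le_div_iff₀ hv0]; nlinarith [abs_nonneg (s'-s0)]
          have habs2 : (n:ℝ)/v0 ≤ |s'-s0| := by
            rw [div_le_iff₀ hv0]; nlinarith [abs_nonneg (s'-s0)]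
          rcases le_or_gt s0 s' with h|h
          · left
            rw [abs_of_nonneg (by linarith)] at habs1 habs2
            constructor <;> linarith
          · right
            rw [abs_of_neg (by linarith)] at habs1 habs2
            constructor <;> linarith
        calc volume (E n) ≤ volume (Icc (s0 + n/v0) (s0 + (n+1)/v0) ∪ Icc (s0 - (n+1)/v0) (s0 - n/v0)) :=
              measure_mono hsub
          _ ≤ volume (Icc (s0 + n/v0) (s0 + (n+1)/v0)) + volume (Icc (s0 - (n+1)/v0) (s0 - n/v0)) :=
              measure_union_le _ _
          _ = ENNReal.ofReal (1/v0) + ENNReal.ofReal (1/v0) := by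
              rw [Real.volume_Icc, Real.volume_Icc,
                show s0 + ((n:ℝ)+1)/v0 - (s0 + (n:ℝ)/v0) = 1/v0 by field_simp; ring,
                show s0 - (n:ℝ)/v0 - (s0 - ((n:ℝ)+1)/v0) = 1/v0 by field_simp; ring]
          _ = ENNReal.ofReal (2/v0) := by
              rw [← ENNReal.ofReal_add (by positivity) (by positivity)]
              congr 1; ring
    _ = (∑' n : ℕ, ENNReal.ofReal (Real.exp (-(c * (n:ℝ)^((1:ℝ)/3))))) * ENNReal.ofReal (2/v0) :=
        ENNReal.tsum_mul_right





theorem stmt11 (d : ℕ) (hd : 1 ≤ d) (lam0 : ℝ) (h0 : 0 < lam0) (h1 : lam0 ≤ 1) :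
    ∃ C : ℝ, 0 < C ∧ ∀ lam1 : ℝ, lam0 / 2 ≤ lam1 → lam1 ≤ 0.9 * lam0 →
      ∀ t : ℝ, 10 ≤ t → ∀ k : Fin d → ℤ, k ≠ 0 →
      (∑' a : {a : Fin d → ℤ // ‖latc a‖ ≤ ‖latc k‖ / 8},
        ∫⁻ s in Set.Ioc (0.99 * t) t, ENNReal.ofReal
          (|t - s| *
            (Aw lam1 (lam0 / 200) t (latc k) (t • latc k) /
              Aw lam1 (lam0 / 200) s (latc k) (t • latc k)) *
            Real.exp (-(lam0 / 200) * (‖latc a.1‖ ^ ((1:ℝ)/3) +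
              ‖s • latc a.1 + (t - s) • latc k‖ ^ ((1:ℝ)/3)))))
        ≤ ENNReal.ofReal C := by
  set δ : ℝ := lam0/200 with hδ_def
  have hδ0 : 0 < δ := by positivity
  have hδ1 : δ ≤ 1/200 := by rw [hδ_def]; linarith
  have hc20 : 0 < δ/2 := by positivity
  have hc21 : δ/2 ≤ 1 := by linarith
  -- the constants
  set Sz : ℝ := ∑' n : ℕ, Real.exp (-(δ/2 * (n:ℝ) ^ ((1:ℝ)/3))) with hSz
  have hSz_sum : Summable (fun n : ℕ => Real.exp (-(δ/2 * (n:ℝ) ^ ((1:ℝ)/3)))) :=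
    summable_exp_nat (δ/2) hc20 hc21
  have hSz0 : 0 ≤ Sz := tsum_nonneg (fun n => (Real.exp_pos _).le)
  set T : ℝ := ∑' a : Fin d → ℤ, Real.exp (-(δ/2 * ‖latc a‖ ^ ((1:ℝ)/3))) with hT
  have hT_sum : Summable (fun a : Fin d → ℤ => Real.exp (-(δ/2 * ‖latc a‖ ^ ((1:ℝ)/3)))) :=
    summable_exp_latc d hd (δ/2) hc20 hc21
  have hT0 : 0 ≤ T := tsum_nonneg (fun a => (Real.exp_pos _).le)
  set D : ℝ := (10^10/δ^11) * ((16/7) * Sz) with hD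
  have hD0 : 0 ≤ D := by positivity
  refine ⟨D * T + 1, by positivity, ?_⟩
  intro lam1 _hl1 _hl2 t ht k hk
  set nk : ℝ := ‖latc k‖ with hnk_def
  have hnk : 1 ≤ nk := latc_norm_ge_one k hk
  have hnk0 : 0 < nk := by linarith
  have ht0 : (0:ℝ) < t := by linarith
  -- bracket bounds
  set r : ℝ := nrm2 (latc k) (t • latc k) with hr
  have hns : ‖t • latc k‖ = t*nk := by
    rw [norm_smul, Real.norm_eq_abs, abs_of_pos ht0, hnk_def]
  have h2 : jap r = Real.sqrt (1 + (nk^2 + (t*nk)^2)) := by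
    rw [jap, hr, nrm2, Real.sq_sqrt (by positivity), hns, hnk_def]
  have hJl : t*nk ≤ jap r := by
    rw [h2]
    apply (Real.le_sqrt (by positivity) (by positivity)).mpr
    nlinarith [sq_nonneg nk]
  have hJu : jap r ≤ 1.01*(t*nk) := by
    rw [h2]
    apply Real.sqrt_le_iff.mpr
    constructor
    · positivity
    · have h10 : (10:ℝ) ≤ t*nk := by nlinarith [mul_le_mul ht hnk (by norm_num : (0:ℝ) ≤ 1) ht0.le]
      have hbig : (100:ℝ) ≤ (t*nk)^2 := by nlinarith
      have hn2 : nk^2 ≤ (t*nk)^2/100 := by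
        have ht10 : (10:ℝ) ≤ t := ht
        have : (10*nk)^2 ≤ (t*nk)^2 := by
          apply pow_le_pow_left₀ (by positivity) ?_ 2
          nlinarith
        nlinarith
      nlinarith
  -- the sum
  calc (∑' a : {a : Fin d → ℤ // ‖latc a‖ ≤ ‖latc k‖ / 8}, ∫⁻ s in Set.Ioc (0.99 * t) t,
          ENNReal.ofReal (|t - s| * (Aw lam1 (lam0/200) t (latc k) (t • latc k) /
            Aw lam1 (lam0/200) s (latc k) (t • latc k)) *
            Real.exp (-(lam0/200) * (‖latc a.1‖ ^ ((1:ℝ)/3) +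
              ‖s • latc a.1 + (t - s) • latc k‖ ^ ((1:ℝ)/3)))))
      ≤ ∑' a : {a : Fin d → ℤ // ‖latc a‖ ≤ ‖latc k‖ / 8},
          ENNReal.ofReal (D * Real.exp (-(δ/2 * ‖latc a.1‖ ^ ((1:ℝ)/3)))) := by
        apply ENNReal.tsum_le_tsum
        intro a
        -- per-a bound
        set na : ℝ := ‖latc a.1‖ with hna_def
        have hna0 : 0 ≤ na := norm_nonneg _
        have ha8 : na ≤ nk/8 := a.2
        have hna : na = 0 ∨ 1 ≤ na := by
          by_cases hz : a.1 = 0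
          · left
            rw [hna_def, hz, show latc (0 : Fin d → ℤ) = 0 by
              ext i; simp [latc], norm_zero]
          · right
            exact latc_norm_ge_one a.1 hz
        set v : EuclideanSpace ℝ (Fin d) := latc a.1 - latc k with hv_def
        have hv78 : (7/8)*nk ≤ ‖v‖ := by
          have h1 : ‖latc k‖ - ‖latc a.1‖ ≤ ‖latc k - latc a.1‖ := norm_sub_norm_le _ _
          rw [norm_sub_rev] at h1
          rw [hv_def]
          rw [hnk_def] at ha8 ⊢
          linarith [h1, ha8]
        have hv0 : 0 < ‖v‖ := by linarith
        set c0 : ℝ := (inner ℝ (latc k) v : ℝ) with hc0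
        set s0 : ℝ := -(t * c0)/‖v‖^2 with hs0_def
        have hgeom : ∀ s' : ℝ, ‖v‖ * |s' - s0| ≤ ‖s' • latc a.1 + (t - s') • latc k‖ := by
          intro s'
          have hXv : s' • latc a.1 + (t - s') • latc k = s' • v + t • latc k := by
            rw [hv_def]
            module
          have hinner : (inner ℝ (s' • v + t • latc k) v : ℝ) = (s' - s0)*‖v‖^2 := by
            rw [inner_add_left, real_inner_smul_left, real_inner_smul_left,
              real_inner_self_eq_norm_sq, ← hc0, hs0_def]
            field_simp; ring
          have habs := abs_real_inner_le_norm (s' • v + t • latc k) v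
          rw [hinner, abs_mul, abs_of_nonneg (by positivity : (0:ℝ) ≤ ‖v‖^2)] at habs
          rw [hXv]
          nlinarith [norm_nonneg (s' • v + t • latc k), abs_nonneg (s' - s0)]
        -- pointwise bound inside the integral
        set Eb : ℝ := (10^10/δ^11) * nk * Real.exp (-(δ/2 * na ^ ((1:ℝ)/3))) with hEb
        have hEb0 : 0 ≤ Eb := by positivity
        have hcontX : Continuous (fun s : ℝ => ‖s • latc a.1 + (t - s) • latc k‖) := by
          apply Continuous.norm
          exact (continuous_id.smul continuous_const).add
            ((continuous_const.sub continuous_id).smul continuous_const)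
        have hptw : ∫⁻ s in Set.Ioc (0.99 * t) t, ENNReal.ofReal
              (|t - s| * (Aw lam1 δ t (latc k) (t • latc k) /
                Aw lam1 δ s (latc k) (t • latc k)) *
                Real.exp (-δ * (na ^ ((1:ℝ)/3) +
                  ‖s • latc a.1 + (t - s) • latc k‖ ^ ((1:ℝ)/3))))
            ≤ ∫⁻ s in Set.Ioc (0.99 * t) t, ENNReal.ofReal
              (Eb * Real.exp (-(δ/2 * (‖s • latc a.1 + (t - s) • latc k‖) ^ ((1:ℝ)/3)))) := by
          apply setLIntegral_mono_ae
          · have hcontg : Continuous (fun s : ℝ =>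
                Eb * Real.exp (-(δ/2 * (‖s • latc a.1 + (t - s) • latc k‖) ^ ((1:ℝ)/3)))) := by
              apply continuous_const.mul
              apply Real.continuous_exp.comp
              exact (continuous_const.mul (hcontX.rpow_const (fun s => Or.inr (by norm_num)))).neg
            exact (ENNReal.continuous_ofReal.comp hcontg).measurable.aemeasurable
          · apply ae_of_all
            intro s hs
            obtain ⟨hs1, hs2⟩ := hs
            have hspos : (0:ℝ) < s := by linarith
            set nX : ℝ := ‖s • latc a.1 + (t - s) • latc k‖ with hnX_def
            have hnX0 : 0 ≤ nX := norm_nonneg _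
            have hnsa : ‖s • latc a.1‖ = s*na := by
              rw [norm_smul, Real.norm_eq_abs, abs_of_pos hspos, hna_def]
            have hnsk : ‖(t-s) • latc k‖ = (t-s)*nk := by
              rw [norm_smul, Real.norm_eq_abs, abs_of_nonneg (by linarith : (0:ℝ) ≤ t-s), hnk_def]
            have hX1 : s*na - (t-s)*nk ≤ nX := by
              have h := norm_sub_norm_le (s • latc a.1) (-((t - s) • latc k))
              rw [norm_neg, sub_neg_eq_add, hnsa, hnsk] at h
              exact h
            have hX2 : (t-s)*nk - s*na ≤ nX := by
              have h := norm_sub_norm_le ((t - s) • latc k) (-(s • latc a.1))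
              rw [norm_neg, sub_neg_eq_add, hnsa, hnsk, add_comm] at h
              exact h
            apply ENNReal.ofReal_le_ofReal
            have hkey := key_pointwise lam1 δ t s r na nk nX hδ0 hδ1 ht hs1 hs2
              hnk hna0 hna hnX0 hJl hJu hX1 hX2
            calc |t - s| * (Aw lam1 δ t (latc k) (t • latc k) /
                  Aw lam1 δ s (latc k) (t • latc k)) *
                  Real.exp (-δ * (na ^ ((1:ℝ)/3) + nX ^ ((1:ℝ)/3)))
                = (t-s) * Real.exp (lamW lam1 δ t r - lamW lam1 δ s r)
                  * Real.exp (-(δ * (na ^ ((1:ℝ)/3) + nX ^ ((1:ℝ)/3)))) := by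
                  rw [abs_of_nonneg (by linarith : (0:ℝ) ≤ t-s), Aw, Aw, ← Real.exp_sub, ← hr,
                    show -δ * (na ^ ((1:ℝ)/3) + nX ^ ((1:ℝ)/3))
                      = -(δ * (na ^ ((1:ℝ)/3) + nX ^ ((1:ℝ)/3))) by ring]
              _ ≤ (10^10/δ^11) * nk * (Real.exp (-(δ/2 * na ^ ((1:ℝ)/3)))
                    * Real.exp (-(δ/2 * nX ^ ((1:ℝ)/3)))) := hkey
              _ = Eb * Real.exp (-(δ/2 * nX ^ ((1:ℝ)/3))) := by rw [hEb]; ring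
        -- now the shell bound
        have hsplitc : ∫⁻ s in Set.Ioc (0.99 * t) t, ENNReal.ofReal
              (Eb * Real.exp (-(δ/2 * (‖s • latc a.1 + (t - s) • latc k‖) ^ ((1:ℝ)/3))))
            = ENNReal.ofReal Eb * ∫⁻ s in Set.Ioc (0.99 * t) t, ENNReal.ofReal
              (Real.exp (-(δ/2 * (‖s • latc a.1 + (t - s) • latc k‖) ^ ((1:ℝ)/3)))) := by
          calc ∫⁻ s in Set.Ioc (0.99 * t) t, ENNReal.ofReal
                (Eb * Real.exp (-(δ/2 * (‖s • latc a.1 + (t - s) • latc k‖) ^ ((1:ℝ)/3))))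
              = ∫⁻ s in Set.Ioc (0.99 * t) t, ENNReal.ofReal Eb * ENNReal.ofReal
                (Real.exp (-(δ/2 * (‖s • latc a.1 + (t - s) • latc k‖) ^ ((1:ℝ)/3)))) := by
                apply lintegral_congr
                intro s
                rw [ENNReal.ofReal_mul hEb0]
            _ = _ := lintegral_const_mul' _ _ ENNReal.ofReal_ne_top
        have hshell := shell_integral (δ/2) ‖v‖ s0 (0.99*t) t
          (fun s => ‖s • latc a.1 + (t - s) • latc k‖) hc20 hv0 hgeom
        have hEsum : (∑' n : ℕ, ENNReal.ofReal (Real.exp (-(δ/2 * (n:ℝ) ^ ((1:ℝ)/3)))))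
            = ENNReal.ofReal Sz := by
          rw [hSz, ENNReal.ofReal_tsum_of_nonneg (fun n => (Real.exp_pos _).le) hSz_sum]
        have hfinal : ENNReal.ofReal Eb * ((ENNReal.ofReal Sz) * ENNReal.ofReal (2/‖v‖))
            ≤ ENNReal.ofReal (D * Real.exp (-(δ/2 * na ^ ((1:ℝ)/3)))) := by
          rw [← ENNReal.ofReal_mul hSz0, ← ENNReal.ofReal_mul hEb0]
          apply ENNReal.ofReal_le_ofReal
          have hfrac : nk*(2/‖v‖) ≤ 16/7 := by
            rw [mul_div_assoc']
            rw [div_le_iff₀ hv0]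
            linarith
          calc Eb * (Sz * (2/‖v‖))
              = ((10^10/δ^11) * Real.exp (-(δ/2 * na ^ ((1:ℝ)/3))) * Sz) * (nk*(2/‖v‖)) := by
                rw [hEb]; ring
            _ ≤ ((10^10/δ^11) * Real.exp (-(δ/2 * na ^ ((1:ℝ)/3))) * Sz) * (16/7) := by
                apply mul_le_mul_of_nonneg_left hfrac (by positivity)
            _ = D * Real.exp (-(δ/2 * na ^ ((1:ℝ)/3))) := by rw [hD]; ring
        calc ∫⁻ s in Set.Ioc (0.99 * t) t, ENNReal.ofReal
              (|t - s| * (Aw lam1 δ t (latc k) (t • latc k) /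
                Aw lam1 δ s (latc k) (t • latc k)) *
                Real.exp (-δ * (na ^ ((1:ℝ)/3) +
                  ‖s • latc a.1 + (t - s) • latc k‖ ^ ((1:ℝ)/3))))
            ≤ ∫⁻ s in Set.Ioc (0.99 * t) t, ENNReal.ofReal
              (Eb * Real.exp (-(δ/2 * (‖s • latc a.1 + (t - s) • latc k‖) ^ ((1:ℝ)/3)))) := hptw
          _ = ENNReal.ofReal Eb * ∫⁻ s in Set.Ioc (0.99 * t) t, ENNReal.ofReal
              (Real.exp (-(δ/2 * (‖s • latc a.1 + (t - s) • latc k‖) ^ ((1:ℝ)/3)))) := hsplitc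
          _ ≤ ENNReal.ofReal Eb * ((∑' n : ℕ, ENNReal.ofReal (Real.exp (-(δ/2 * (n:ℝ) ^ ((1:ℝ)/3)))))
                * ENNReal.ofReal (2/‖v‖)) := mul_le_mul_right hshell _
          _ = ENNReal.ofReal Eb * ((ENNReal.ofReal Sz) * ENNReal.ofReal (2/‖v‖)) := by rw [hEsum]
          _ ≤ ENNReal.ofReal (D * Real.exp (-(δ/2 * na ^ ((1:ℝ)/3)))) := hfinal
    _ ≤ ∑' a : Fin d → ℤ, ENNReal.ofReal (D * Real.exp (-(δ/2 * ‖latc a‖ ^ ((1:ℝ)/3)))) := by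
        apply Summable.tsum_le_tsum_of_inj (Subtype.val) Subtype.val_injective
          (fun _ _ => zero_le) (fun _ => le_rfl) ENNReal.summable ENNReal.summable
    _ = ENNReal.ofReal (D * T) := by
        rw [hT, ← tsum_mul_left, ENNReal.ofReal_tsum_of_nonneg]
        · intro a; positivity
        · exact hT_sum.mul_left D
    _ ≤ ENNReal.ofReal (D * T + 1) := ENNReal.ofReal_le_ofReal (by linarith)
end
end

section
/- Let d ≥ 1, λ₀ ∈ (0,1], δ := λ₀/200, and λ₁ ∈ [λ₀/2, 0.9λ₀]. For all real numbers 0 ≤ t ≤ s and all k ∈ ℤ^d \ {0} one has A♯(t,k,tk)/A♯(s,k,tk) ≤ exp( −δ² |t−s| (1+s)^{−δ−1} |k|^{1/3} ⟨t⟩^{1/3} ). -/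
noncomputable section

lemma bern_aux {δ t s : ℝ} (hδ0 : 0 < δ) (hδ1 : δ ≤ 1) (ht : 0 ≤ t) (hts : t ≤ s) :
    δ * (s - t) * (1 + s) ^ (-δ - 1) ≤ (1 + t) ^ (-δ) - (1 + s) ^ (-δ) := by
  have hu0 : (0:ℝ) < 1 + t := by linarith
  have hv0 : (0:ℝ) < 1 + s := by linarith
  set u := 1 + t with hu
  set v := 1 + s with hv
  set w := u / v with hwdef
  have hw0 : 0 < w := div_pos hu0 hv0
  have hw1 : w ≤ 1 := (div_le_one hv0).mpr (by linarith)
  -- Bernoulli: w^δ ≤ 1 + δ*(w-1)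
  have hbern : w ^ δ ≤ 1 + δ * (w - 1) := by
    have := rpow_one_add_le_one_add_mul_self (s := w - 1) (by linarith) hδ0.le hδ1
    simpa using this
  have hwd : 0 < w ^ δ := Real.rpow_pos_of_pos hw0 _
  -- (1 + δ(1-w)) ≤ w^(-δ)
  have key : 1 + δ * (1 - w) ≤ w ^ (-δ) := by
    have h1 : (1 + δ * (1 - w)) * w ^ δ ≤ 1 := by nlinarith [sq_nonneg (δ * (1 - w))]
    have h2 : w ^ (-δ) = (w ^ δ)⁻¹ := by rw [Real.rpow_neg hw0.le]
    rw [h2, inv_eq_one_div, le_div_iff₀ hwd]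
    exact h1
  -- rewrite both sides with v^(-δ)
  have hvd : 0 < v ^ (-δ) := Real.rpow_pos_of_pos hv0 _
  have hwrd : w ^ (-δ) = u ^ (-δ) / v ^ (-δ) := by
    rw [hwdef, Real.div_rpow hu0.le hv0.le]
  have hvexp : v ^ (-δ - 1) = v ^ (-δ) * v⁻¹ := by
    rw [show -δ - 1 = -δ + (-1) by ring, Real.rpow_add hv0, Real.rpow_neg_one]
  have h3 : δ * (s - t) * (v ^ (-δ) * v⁻¹) = v ^ (-δ) * (δ * (1 - w)) := by
    have : s - t = v - u := by rw [hu, hv]; ring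
    rw [this, hwdef]
    field_simp
  rw [hvexp, h3]
  have h4 : v ^ (-δ) * (δ * (1 - w)) ≤ v ^ (-δ) * (w ^ (-δ) - 1) := by
    apply mul_le_mul_of_nonneg_left _ hvd.le
    linarith
  refine h4.trans_eq ?_
  rw [hwrd]
  field_simp

theorem stmt14 (d : ℕ) (hd : 1 ≤ d) (lam0 lam1 : ℝ)
    (h0 : 0 < lam0) (h1 : lam0 ≤ 1)
    (hl1 : lam0 / 2 ≤ lam1) (hl2 : lam1 ≤ 0.9 * lam0)
    (t s : ℝ) (ht : 0 ≤ t) (hts : t ≤ s) (k : Fin d → ℤ) (hk : k ≠ 0) :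
    AwSharp lam1 (lam0 / 200) t (latc k) (t • latc k) /
        AwSharp lam1 (lam0 / 200) s (latc k) (t • latc k) ≤
      Real.exp (-(lam0 / 200) ^ 2 * |t - s| * (1 + s) ^ (-(lam0 / 200) - 1) *
        ‖latc k‖ ^ ((1:ℝ)/3) * jap t ^ ((1:ℝ)/3)) := by
  set δ := lam0 / 200 with hδdef
  have hδ0 : 0 < δ := by positivity
  have hδ1 : δ ≤ 1 := by rw [hδdef]; linarith
  set K := ‖latc (d := d) k‖ with hK
  have hK0 : 0 ≤ K := norm_nonneg _
  -- compute nrm2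
  have hns : ‖t • latc (d := d) k‖ = t * K := by
    rw [norm_smul, Real.norm_eq_abs, abs_of_nonneg ht]
  have hjt0 : 0 < jap t := Real.sqrt_pos.mpr (by positivity)
  set r := nrm2 (latc (d := d) k) (t • latc (d := d) k) with hrdef
  have hr : r = K * jap t := by
    rw [hrdef, nrm2, hns, jap]
    rw [show K ^ 2 + (t * K) ^ 2 = K ^ 2 * (1 + t ^ 2) by ring,
      Real.sqrt_mul (sq_nonneg K), Real.sqrt_sq hK0]
  have hr0 : 0 ≤ r := by rw [hr]; positivity
  have hjr0 : 0 < jap r := Real.sqrt_pos.mpr (by positivity)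
  have hjr_ge : r ≤ jap r := by
    rw [jap]
    calc r = Real.sqrt (r ^ 2) := (Real.sqrt_sq hr0).symm
    _ ≤ Real.sqrt (1 + r ^ 2) := Real.sqrt_le_sqrt (by linarith)
  -- power comparison
  have hpow : K ^ ((1:ℝ)/3) * jap t ^ ((1:ℝ)/3) ≤ jap r ^ ((1:ℝ)/3) := by
    rw [← Real.mul_rpow hK0 hjt0.le]
    exact Real.rpow_le_rpow (by positivity) (hr ▸ hjr_ge) (by norm_num)
  have ha0 : 0 < jap r ^ ((1:ℝ)/3) := Real.rpow_pos_of_pos hjr0 _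
  set a := jap r ^ ((1:ℝ)/3) with hadef
  set c := jap r ^ (-(2:ℝ)/3) with hcdef
  have hc0 : 0 < c := Real.rpow_pos_of_pos hjr0 _
  -- difference of exponents
  rw [AwSharp, AwSharp, ← Real.exp_sub, Real.exp_le_exp, lamSharpW, lamSharpW]
  rw [← hrdef, ← hadef, ← hcdef]
  -- second bracket nonpositive
  have h2nd : (1 + s * c) ^ (-δ) ≤ (1 + t * c) ^ (-δ) := by
    apply Real.rpow_le_rpow_of_nonpos (by nlinarith) (by nlinarith) (by linarith)
  have h1st := bern_aux hδ0 hδ1 ht hts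
  have habs : |t - s| = s - t := by rw [abs_of_nonpos (by linarith)]; ring
  rw [habs]
  have hB0 : 0 < (1 + s) ^ (-δ - 1) := Real.rpow_pos_of_pos (by linarith) _
  have hcoef : 0 ≤ δ ^ 2 * (s - t) * (1 + s) ^ (-δ - 1) :=
    mul_nonneg (mul_nonneg (sq_nonneg δ) (by linarith)) hB0.le
  have hstep : δ * ((1 + s) ^ (-δ) - (1 + t) ^ (-δ)) * a
      ≤ -(δ ^ 2 * (s - t) * (1 + s) ^ (-δ - 1)) * a := by
    apply mul_le_mul_of_nonneg_right _ ha0.le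
    nlinarith
  have hfinal : -(δ ^ 2 * (s - t) * (1 + s) ^ (-δ - 1)) * a
      ≤ -δ ^ 2 * (s - t) * (1 + s) ^ (-δ - 1) * (K ^ ((1:ℝ)/3) * jap t ^ ((1:ℝ)/3)) := by
    rw [show -(δ ^ 2 * (s - t) * (1 + s) ^ (-δ - 1)) * a
      = -(δ ^ 2 * (s - t) * (1 + s) ^ (-δ - 1) * a) by ring,
      show -δ ^ 2 * (s - t) * (1 + s) ^ (-δ - 1) * (K ^ ((1:ℝ)/3) * jap t ^ ((1:ℝ)/3))
      = -(δ ^ 2 * (s - t) * (1 + s) ^ (-δ - 1) * (K ^ ((1:ℝ)/3) * jap t ^ ((1:ℝ)/3))) by ring,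
      neg_le_neg_iff]
    exact mul_le_mul_of_nonneg_left hpow hcoef
  have h2mul : δ * (1 + s * c) ^ (-δ) * a ≤ δ * (1 + t * c) ^ (-δ) * a :=
    mul_le_mul_of_nonneg_right (mul_le_mul_of_nonneg_left h2nd hδ0.le) ha0.le
  linarith
end
end
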